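/- arXiv:2003.14223 — 4 statements merged into one kernel-verified Lean document; each statement's English description precedes it below -/
import Mathlib

section
/- (E-description of interpolation groups.) Let X be a rearrangement invariant sequence group with l_0 ⊆ X ⊆ l_1. Then X is an interpolation group with respect to the pair (l_0, l_1) if and only if there is a constant C > 0 (depending only on X) such that: whenever b ∈ X, x ∈ l_1 and E(t, x; l_0, l_1) ≤ E(t, b; l_0, l_1) for all t > 0, it follows that x ∈ X and ‖x‖_X ≤ C‖b‖_X. -/
open scoped BigOperators ENNReal

noncomputable section

/-- `x ∈ ℓ¹`: the sequence is absolutely summable. -/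
def MemL1 (x : ℕ → ℝ) : Prop := Summable fun i => |x i|

/-- `‖x‖₁ = ∑ |x i|`. -/
def l1Norm (x : ℕ → ℝ) : ℝ := ∑' i, |x i|

/-- `x ∈ ℓ⁰`: the sequence is finitely supported (eventually zero). -/
def FinSupp (x : ℕ → ℝ) : Prop := {i : ℕ | x i ≠ 0}.Finite

/-- `‖x‖₀ = card (supp x)`. -/
def suppCard (x : ℕ → ℝ) : ℕ := {i : ℕ | x i ≠ 0}.ncard

/-- The nonincreasing rearrangement `u_k^* = inf {t ≥ 0 : card {i : |u i| > t} < k}`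
(meaningful for `k ≥ 1`). -/
def rearr (u : ℕ → ℝ) (k : ℕ) : ℝ :=
  sInf {t : ℝ | 0 ≤ t ∧ {i : ℕ | t < |u i|}.Finite ∧ {i : ℕ | t < |u i|}.ncard < k}

/-- The tail sum `∑_{i=k}^∞ u_i^*` of the nonincreasing rearrangement. -/
def tailSum (u : ℕ → ℝ) (k : ℕ) : ℝ := ∑' n : ℕ, rearr u (k + n)

/-- A homomorphism of the additive group of sequences. -/
def IsHom (T : (ℕ → ℝ) → ℕ → ℝ) : Prop :=
  (∀ x y, T (x + y) = T x + T y) ∧ ∀ x, T (-x) = -T x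

/-- `T` is bounded on `ℓ¹` with constant `M`. -/
def L1BddBy (T : (ℕ → ℝ) → ℕ → ℝ) (M : ℝ) : Prop :=
  ∀ x, MemL1 x → MemL1 (T x) ∧ l1Norm (T x) ≤ M * l1Norm x

/-- `T` is bounded on `ℓ⁰` with constant `M`. -/
def L0BddBy (T : (ℕ → ℝ) → ℕ → ℝ) (M : ℝ) : Prop :=
  ∀ x, FinSupp x → FinSupp (T x) ∧ (suppCard (T x) : ℝ) ≤ M * suppCard x

/-- `a ∈ Orb (b; ℓ⁰, ℓ¹)`. -/
def InOrbit (b a : ℕ → ℝ) : Prop :=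
  ∃ T M, IsHom T ∧ L1BddBy T M ∧ L0BddBy T M ∧ T b = a

/-- The orbit quasi-norm `‖a‖_{Orb(b; ℓ⁰, ℓ¹)}`: the infimum of
`max (‖T‖_{ℓ¹→ℓ¹}, ‖T‖_{ℓ⁰→ℓ⁰})` over homomorphisms `T` with `T b = a`, expressed as the
infimum of constants `M` for which some homomorphism `T` with `T b = a` is `M`-bounded on
both `ℓ⁰` and `ℓ¹`. -/
def orbNorm (b a : ℕ → ℝ) : ℝ :=
  sInf {M : ℝ | ∃ T, IsHom T ∧ L1BddBy T M ∧ L0BddBy T M ∧ T b = a}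

/-- The approximative E-functional of the pair `(ℓ⁰, ℓ¹)`. -/
def Efun (t : ℝ) (x : ℕ → ℝ) : ℝ :=
  sInf {r : ℝ | ∃ x₀, FinSupp x₀ ∧ (suppCard x₀ : ℝ) ≤ t ∧ r = l1Norm (x - x₀)}

/-- The E-orbit quasi-norm `‖x‖_{E-Orb(b; ℓ⁰, ℓ¹)}`. -/
def eOrbNorm (b x : ℕ → ℝ) : ℝ :=
  sInf {C : ℝ | 0 < C ∧ ∀ t > 0, Efun t x ≤ C * Efun (t / C) b}

/-- Peetre's K-functional of the pair `(ℓ⁰, ℓ¹)`. -/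
def Kfun (t : ℝ) (x : ℕ → ℝ) : ℝ :=
  sInf {r : ℝ | ∃ x₀ x₁, x = x₀ + x₁ ∧ FinSupp x₀ ∧ MemL1 x₁ ∧
    r = (suppCard x₀ : ℝ) + t * l1Norm x₁}

/-- The K-orbit quasi-norm `‖x‖_{K-Orb(b; ℓ⁰, ℓ¹)} = sup_{t>0} K(t,x)/K(t,b)`, expressed as
the least constant `C ≥ 0` with `K(t,x) ≤ C·K(t,b)` for all `t > 0`. -/
def kOrbNorm (b x : ℕ → ℝ) : ℝ :=
  sInf {C : ℝ | 0 ≤ C ∧ ∀ t > 0, Kfun t x ≤ C * Kfun t b}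

/-- `X` (with quasi-norm `N`) is a rearrangement invariant sequence group. -/
def IsRIGroup (X : Set (ℕ → ℝ)) (N : (ℕ → ℝ) → ℝ) : Prop :=
  (∀ x ∈ X, 0 ≤ N x) ∧
  (∀ x ∈ X, (N x = 0 ↔ x = 0)) ∧
  (∀ x ∈ X, -x ∈ X ∧ N (-x) = N x) ∧
  (∀ x ∈ X, ∀ y ∈ X, x + y ∈ X ∧ N (x + y) ≤ N x + N y) ∧
  (∀ x y, y ∈ X → (∀ k : ℕ, 1 ≤ k → rearr x k ≤ rearr y k) → x ∈ X ∧ N x ≤ N y)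

/-- `X` is an interpolation group with respect to the pair `(ℓ⁰, ℓ¹)`: every homomorphism
bounded on both `ℓ⁰` and `ℓ¹` maps `X` into `X` and is bounded on `X`. -/
def InterpGroup (X : Set (ℕ → ℝ)) (N : (ℕ → ℝ) → ℝ) : Prop :=
  ∀ T : (ℕ → ℝ) → ℕ → ℝ, IsHom T → (∃ M, L1BddBy T M ∧ L0BddBy T M) →
    (∀ x ∈ X, T x ∈ X) ∧ ∃ M' : ℝ, 0 ≤ M' ∧ ∀ x ∈ X, N (T x) ≤ M' * N x

/-- The dilation `σ_m`: each coordinate repeated `m` times (sequences indexed from 1),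
`(σ_m b)_n = b_{⌈n/m⌉}`. -/
def sigmaDil (m : ℕ) (b : ℕ → ℝ) : ℕ → ℝ := fun n => b ((n - 1) / m + 1)

/-- The dilation `σ_{1/n}`: averages over consecutive blocks of length `n`
(sequences indexed from 1). -/
def sigmaAvg (n : ℕ) (b : ℕ → ℝ) : ℕ → ℝ :=
  fun j => (n : ℝ)⁻¹ * ∑ k ∈ Finset.Icc ((j - 1) * n + 1) (j * n), b k

end
section Aux

open Classical in
noncomputable section

namespace EInterp

/-! ### Basic lemmas -/

lemma finSupp_zero : FinSupp (0 : ℕ → ℝ) := by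
  simp [FinSupp]

lemma suppCard_zero : suppCard (0 : ℕ → ℝ) = 0 := by
  simp [suppCard]

lemma finSupp_memL1 {x : ℕ → ℝ} (h : FinSupp x) : MemL1 x := by
  refine summable_of_ne_finset_zero (s := h.toFinset) ?_
  intro b hb
  have hb : x b = 0 := by by_contra h'; exact hb ((Set.Finite.mem_toFinset h).mpr h')
  simp [hb]

lemma memL1_add {x y : ℕ → ℝ} (hx : MemL1 x) (hy : MemL1 y) : MemL1 (x + y) := by
  refine Summable.of_nonneg_of_le (fun i => abs_nonneg _) (fun i => ?_) (hx.add hy)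
  exact abs_add_le _ _

lemma memL1_neg {x : ℕ → ℝ} (hx : MemL1 x) : MemL1 (-x) := by
  simpa [MemL1, abs_neg] using hx

lemma memL1_sub {x y : ℕ → ℝ} (hx : MemL1 x) (hy : MemL1 y) : MemL1 (x - y) := by
  simpa [sub_eq_add_neg] using memL1_add hx (memL1_neg hy)

lemma l1Norm_nonneg (x : ℕ → ℝ) : 0 ≤ l1Norm x :=
  tsum_nonneg (fun i => abs_nonneg _)

lemma isHom_map_zero {T : (ℕ → ℝ) → ℕ → ℝ} (hT : IsHom T) : T 0 = 0 := by
  have := hT.1 0 0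
  simp only [add_zero] at this
  have h2 := congrArg (fun u => u - T 0) this
  simpa using h2.symm

lemma isHom_map_sub {T : (ℕ → ℝ) → ℕ → ℝ} (hT : IsHom T) (x y : ℕ → ℝ) :
    T (x - y) = T x - T y := by
  rw [sub_eq_add_neg, hT.1 x (-y), hT.2 y, sub_eq_add_neg]

/-! ### Efun basic lemmas -/

lemma Efun_set_nonempty {t : ℝ} (ht : 0 ≤ t) (x : ℕ → ℝ) :
    {r : ℝ | ∃ x₀, FinSupp x₀ ∧ (suppCard x₀ : ℝ) ≤ t ∧ r = l1Norm (x - x₀)}.Nonempty :=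
  ⟨l1Norm (x - 0), 0, finSupp_zero, by simpa [suppCard_zero] using ht, rfl⟩

lemma Efun_set_bddBelow (t : ℝ) (x : ℕ → ℝ) :
    BddBelow {r : ℝ | ∃ x₀, FinSupp x₀ ∧ (suppCard x₀ : ℝ) ≤ t ∧ r = l1Norm (x - x₀)} := by
  refine ⟨0, fun r hr => ?_⟩
  obtain ⟨x₀, -, -, rfl⟩ := hr
  exact l1Norm_nonneg _

lemma Efun_le {t : ℝ} {x x₀ : ℕ → ℝ} (h : FinSupp x₀) (hc : (suppCard x₀ : ℝ) ≤ t) :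
    Efun t x ≤ l1Norm (x - x₀) :=
  csInf_le (Efun_set_bddBelow t x) ⟨x₀, h, hc, rfl⟩

lemma le_Efun {t r : ℝ} (ht : 0 ≤ t) {x : ℕ → ℝ}
    (h : ∀ x₀, FinSupp x₀ → (suppCard x₀ : ℝ) ≤ t → r ≤ l1Norm (x - x₀)) :
    r ≤ Efun t x := by
  refine le_csInf (Efun_set_nonempty ht x) ?_
  rintro s ⟨x₀, h1, h2, rfl⟩
  exact h x₀ h1 h2

lemma Efun_nonneg {t : ℝ} (ht : 0 ≤ t) (x : ℕ → ℝ) : 0 ≤ Efun t x :=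
  le_Efun ht (fun x₀ _ _ => l1Norm_nonneg _)

end EInterp
end
end Aux
section Aux2
noncomputable section
namespace EInterp

/-! ### Pushforward along an injection -/

open Classical in
def push (g : ℕ → ℕ) (x : ℕ → ℝ) : ℕ → ℝ :=
  fun n => if h : ∃ m, g m = n then x h.choose else 0

lemma push_apply {g : ℕ → ℕ} (hg : Function.Injective g) (x : ℕ → ℝ) (m : ℕ) :
    push g x (g m) = x m := by
  have h : ∃ m', g m' = g m := ⟨m, rfl⟩
  simp only [push, dif_pos h]
  exact congrArg x (hg h.choose_spec)

lemma push_eq_zero (g : ℕ → ℕ) (x : ℕ → ℝ) {n : ℕ} (hn : n ∉ Set.range g) :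
    push g x n = 0 := by
  have h : ¬ ∃ m, g m = n := by
    rintro ⟨m, rfl⟩
    exact hn ⟨m, rfl⟩
  simp only [push, dif_neg h]

lemma push_abs_set {g : ℕ → ℕ} (hg : Function.Injective g) (x : ℕ → ℝ) {t : ℝ} (ht : 0 ≤ t) :
    {n | t < |push g x n|} = g '' {m | t < |x m|} := by
  ext n
  simp only [Set.mem_setOf_eq, Set.mem_image]
  constructor
  · intro h
    by_cases hr : n ∈ Set.range g
    · obtain ⟨m, rfl⟩ := hr
      rw [push_apply hg] at h
      exact ⟨m, h, rfl⟩
    · rw [push_eq_zero g x hr] at h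
      simp at h
      linarith
  · rintro ⟨m, hm, rfl⟩
    rwa [push_apply hg]

lemma rearr_push {g : ℕ → ℕ} (hg : Function.Injective g) (x : ℕ → ℝ) (k : ℕ) :
    rearr (push g x) k = rearr x k := by
  unfold rearr
  congr 1
  ext t
  simp only [Set.mem_setOf_eq]
  constructor
  · rintro ⟨ht, hfin, hcard⟩
    rw [push_abs_set hg x ht] at hfin hcard
    refine ⟨ht, hfin.of_finite_image (hg.injOn), ?_⟩
    rwa [Set.ncard_image_of_injective _ hg] at hcard
  · rintro ⟨ht, hfin, hcard⟩
    rw [push_abs_set hg x ht]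
    exact ⟨ht, hfin.image g, by
      rwa [Set.ncard_image_of_injective _ hg]⟩

lemma memL1_push {g : ℕ → ℕ} (hg : Function.Injective g) {x : ℕ → ℝ} (hx : MemL1 x) :
    MemL1 (push g x) := by
  have hsupp : ∀ n ∉ Set.range g, |push g x n| = 0 := by
    intro n hn
    simp [push_eq_zero g x hn]
  have hcomp : ((fun n => |push g x n|) ∘ g) = fun m => |x m| := by
    funext m
    simp [Function.comp, push_apply hg]
  have h2 : Summable fun n => |push g x n| := by
    rw [← hg.summable_iff hsupp (f := fun n => |push g x n|), hcomp]
    exact hx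
  exact h2

/-! ### membership closure lemmas -/

variable {X : Set (ℕ → ℝ)} {N : (ℕ → ℝ) → ℝ}

lemma X_push (hri : IsRIGroup X N) {g : ℕ → ℕ} (hg : Function.Injective g)
    {x : ℕ → ℝ} (hx : x ∈ X) : push g x ∈ X ∧ N (push g x) = N x := by
  have h1 := hri.2.2.2.2 (push g x) x hx (fun k _ => le_of_eq (rearr_push hg x k))
  have h2 := hri.2.2.2.2 x (push g x) h1.1 (fun k _ => ge_of_eq (rearr_push hg x k))
  exact ⟨h1.1, le_antisymm h1.2 h2.2⟩

lemma X_zero (hri : IsRIGroup X N) (hl0 : ∀ x, FinSupp x → x ∈ X) :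
    (0 : ℕ → ℝ) ∈ X ∧ N 0 = 0 := by
  have h0 : (0 : ℕ → ℝ) ∈ X := hl0 0 finSupp_zero
  exact ⟨h0, (hri.2.1 0 h0).mpr rfl⟩

lemma X_sum (hri : IsRIGroup X N) (hl0 : ∀ x, FinSupp x → x ∈ X)
    {ι : Type*} (F : Finset ι) (f : ι → ℕ → ℝ) (hf : ∀ i ∈ F, f i ∈ X) :
    (∑ i ∈ F, f i) ∈ X ∧ N (∑ i ∈ F, f i) ≤ ∑ i ∈ F, N (f i) := by
  classical
  induction F using Finset.induction_on with
  | empty =>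
    refine ⟨by simpa using (X_zero hri hl0).1, ?_⟩
    simp [(X_zero hri hl0).2]
  | @insert a s ha ih =>
    have hfa : f a ∈ X := hf a (Finset.mem_insert_self a s)
    have ihs := ih (fun i hi => hf i (Finset.mem_insert_of_mem hi))
    have hadd := hri.2.2.2.1 (f a) hfa (∑ i ∈ s, f i) ihs.1
    rw [Finset.sum_insert ha, Finset.sum_insert ha]
    exact ⟨hadd.1, le_trans hadd.2 (by linarith [ihs.2])⟩

end EInterp
end
end Aux2
section Aux3
noncomputable section
namespace EInterp

variable {X : Set (ℕ → ℝ)} {N : (ℕ → ℝ) → ℝ}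

/-! ### the dilation element used in the backward direction -/

lemma gblock_injective {m i : ℕ} (hm : 0 < m) : Function.Injective (fun q => q * m + i) := by
  intro a b hab
  simp only at hab
  have := Nat.add_right_cancel hab
  exact Nat.eq_of_mul_eq_mul_right hm this

lemma gblock_div {m i q : ℕ} (hm : 0 < m) (hi : i < m) : (q * m + i) / m = q := by
  rw [Nat.add_comm, Nat.mul_comm, Nat.add_mul_div_left _ _ hm, Nat.div_eq_of_lt hi, Nat.zero_add]

lemma push_gblock_apply {m i : ℕ} (hm : 0 < m) (hi : i < m) (x : ℕ → ℝ) (n : ℕ) :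
    push (fun q => q * m + i) x n = if n % m = i then x (n / m) else 0 := by
  by_cases h : n % m = i
  · have hn : n / m * m + i = n := by
      have h2 := Nat.div_add_mod n m
      have h3 : n / m * m = m * (n / m) := Nat.mul_comm _ _
      omega
    have hp : push (fun q => q * m + i) x (n / m * m + i) = x (n / m) :=
      push_apply (gblock_injective hm) x (n / m)
    rw [if_pos h, ← hn, gblock_div hm hi]
    exact hp
  · rw [if_neg h]
    refine push_eq_zero _ _ ?_
    rintro ⟨q, rfl⟩
    simp only at h
    rw [Nat.add_comm, Nat.add_mul_mod_self_right, Nat.mod_eq_of_lt hi] at h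
    exact h rfl

/-- `dilate m x = fun n => m * x (n / m)`, expressed as a finite sum of pushforwards. -/
def dilate (m : ℕ) (x : ℕ → ℝ) : ℕ → ℝ :=
  ∑ p ∈ Finset.range m ×ˢ Finset.range m, push (fun q => q * m + p.1) x

lemma dilate_apply {m : ℕ} (hm : 0 < m) (x : ℕ → ℝ) (n : ℕ) :
    dilate m x n = (m : ℝ) * x (n / m) := by
  classical
  have : dilate m x n = ∑ p ∈ Finset.range m ×ˢ Finset.range m,
      push (fun q => q * m + p.1) x n := by
    simp [dilate]
  rw [this]
  have heval : ∀ p ∈ Finset.range m ×ˢ Finset.range m,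
      push (fun q => q * m + p.1) x n = if n % m = p.1 then x (n / m) else 0 := by
    rintro ⟨i, l⟩ hp
    rw [Finset.mem_product, Finset.mem_range, Finset.mem_range] at hp
    exact push_gblock_apply hm hp.1 x n
  rw [Finset.sum_congr rfl heval]
  rw [Finset.sum_product]
  have hinner : ∀ i ∈ Finset.range m,
      (∑ _l ∈ Finset.range m, if n % m = i then x (n / m) else 0)
        = (m : ℝ) * (if n % m = i then x (n / m) else 0) := by
    intro i _
    rw [Finset.sum_const, Finset.card_range, nsmul_eq_mul]
  rw [Finset.sum_congr rfl hinner, ← Finset.mul_sum]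
  congr 1
  rw [Finset.sum_ite_eq (Finset.range m) (n % m) (fun _ => x (n / m))]
  rw [if_pos (Finset.mem_range.mpr (Nat.mod_lt n hm))]

lemma X_dilate (hri : IsRIGroup X N) (hl0 : ∀ x, FinSupp x → x ∈ X)
    {x : ℕ → ℝ} (hx : x ∈ X) {m : ℕ} (hm : 0 < m) :
    dilate m x ∈ X ∧ N (dilate m x) ≤ (m : ℝ) ^ 2 * N x := by
  have h := X_sum hri hl0 (Finset.range m ×ˢ Finset.range m)
      (fun p => push (fun q => q * m + p.1) x) (fun p hp => by
        rw [Finset.mem_product, Finset.mem_range, Finset.mem_range] at hp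
        exact (X_push hri (gblock_injective hm) hx).1)
  refine ⟨h.1, le_trans h.2 ?_⟩
  have heq : ∀ p ∈ Finset.range m ×ˢ Finset.range m,
      N (push (fun q => q * m + p.1) x) = N x := by
    rintro p hp
    exact (X_push hri (gblock_injective hm) hx).2
  rw [Finset.sum_congr rfl heq, Finset.sum_const, Finset.card_product, Finset.card_range,
    nsmul_eq_mul]
  push_cast
  ring_nf
  exact le_refl _

lemma memL1_finsum {ι : Type*} (F : Finset ι) (f : ι → ℕ → ℝ)
    (hf : ∀ i ∈ F, MemL1 (f i)) : MemL1 (∑ i ∈ F, f i) := by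
  classical
  induction F using Finset.induction_on with
  | empty => simpa using finSupp_memL1 finSupp_zero
  | @insert a s ha ih =>
    rw [Finset.sum_insert ha]
    exact memL1_add (hf a (Finset.mem_insert_self a s))
      (ih (fun i hi => hf i (Finset.mem_insert_of_mem hi)))

lemma memL1_dilate {x : ℕ → ℝ} (hx : MemL1 x) {m : ℕ} (hm : 0 < m) : MemL1 (dilate m x) := by
  refine memL1_finsum _ _ (fun p hp => ?_)
  exact memL1_push (gblock_injective hm) hx

end EInterp
end
end Aux3
section Aux4
noncomputable section
namespace EInterp

variable {X : Set (ℕ → ℝ)} {N : (ℕ → ℝ) → ℝ}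

/-- E-functional of an image under a bounded homomorphism. -/
lemma Efun_image_le {T : (ℕ → ℝ) → ℕ → ℝ} {M : ℝ} (hT : IsHom T)
    (h1 : L1BddBy T M) (h0 : L0BddBy T M) (hM : 1 ≤ M)
    {x : ℕ → ℝ} (hx : MemL1 x) {t : ℝ} (ht : 0 < t) :
    Efun t (T x) ≤ M * Efun (t / M) x := by
  have hMpos : (0 : ℝ) < M := lt_of_lt_of_le one_pos hM
  have hstep : ∀ x₀, FinSupp x₀ → (suppCard x₀ : ℝ) ≤ t / M →
      Efun t (T x) ≤ M * l1Norm (x - x₀) := by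
    intro x₀ hfin hcard
    have hTx₀ := h0 x₀ hfin
    have hcard' : (suppCard (T x₀) : ℝ) ≤ t := by
      calc (suppCard (T x₀) : ℝ) ≤ M * suppCard x₀ := hTx₀.2
        _ ≤ M * (t / M) := by
            exact mul_le_mul_of_nonneg_left hcard (le_of_lt hMpos)
        _ = t := by field_simp
    have hsub : MemL1 (x - x₀) := memL1_sub hx (finSupp_memL1 hfin)
    have hTsub := h1 (x - x₀) hsub
    calc Efun t (T x) ≤ l1Norm (T x - T x₀) := Efun_le hTx₀.1 hcard'
      _ = l1Norm (T (x - x₀)) := by rw [isHom_map_sub hT x x₀]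
      _ ≤ M * l1Norm (x - x₀) := hTsub.2
  -- now pass to the infimum
  have hdivt : (0 : ℝ) ≤ t / M := le_of_lt (div_pos ht hMpos)
  have : Efun t (T x) / M ≤ Efun (t / M) x := by
    refine le_Efun hdivt (fun x₀ hfin hcard => ?_)
    rw [div_le_iff₀ hMpos, mul_comm]
    exact hstep x₀ hfin hcard
  calc Efun t (T x) = M * (Efun t (T x) / M) := by field_simp
    _ ≤ M * Efun (t / M) x := mul_le_mul_of_nonneg_left this (le_of_lt hMpos)

/-- Key lower estimate for the E-functional of the dilated element. -/
lemma le_Efun_dilate {x : ℕ → ℝ} (hx : MemL1 x) {m : ℕ} (hm : 0 < m)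
    {M : ℝ} (hM1 : 1 ≤ M) (hMm : M ≤ (m : ℝ)) {t : ℝ} (ht : 0 < t) :
    M * Efun (t / M) x ≤ Efun t (dilate m x) := by
  classical
  have hMpos : (0 : ℝ) < M := lt_of_lt_of_le one_pos hM1
  refine le_Efun (le_of_lt ht) (fun y₀ hy₀ hy₀c => ?_)
  -- fully covered blocks
  set Sfin : Finset ℕ := hy₀.toFinset with hSfin
  set J : Finset ℕ := (Sfin.image (· / m)).filter (fun j => ∀ l < m, y₀ (j * m + l) ≠ 0)
    with hJ
  -- card estimate : m * J.card ≤ Sfin.card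
  have hblock : ∀ j ∈ J, ∀ l < m, j * m + l ∈ Sfin := by
    intro j hj l hl
    rw [hJ, Finset.mem_filter] at hj
    have := hj.2 l hl
    simp only [hSfin, Set.Finite.mem_toFinset, Set.mem_setOf_eq]
    exact (Set.Finite.mem_toFinset hy₀).mpr this
  have hcardJ : m * J.card ≤ Sfin.card := by
    have hbi : J.biUnion (fun j => (Finset.range m).image (fun l => j * m + l)) ⊆ Sfin := by
      intro n hn
      rw [Finset.mem_biUnion] at hn
      obtain ⟨j, hj, hn⟩ := hn
      rw [Finset.mem_image] at hn
      obtain ⟨l, hl, rfl⟩ := hn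
      exact hblock j hj l (Finset.mem_range.mp hl)
    have hdisj : ∀ j₁ ∈ (J : Finset ℕ), ∀ j₂ ∈ J, j₁ ≠ j₂ →
        Disjoint ((Finset.range m).image (fun l => j₁ * m + l))
          ((Finset.range m).image (fun l => j₂ * m + l)) := by
      intro j₁ _ j₂ _ hne
      rw [Finset.disjoint_left]
      intro n hn1 hn2
      rw [Finset.mem_image] at hn1 hn2
      obtain ⟨l₁, hl₁, rfl⟩ := hn1
      obtain ⟨l₂, hl₂, heq⟩ := hn2
      have e1 : (j₂ * m + l₂) / m = j₂ := gblock_div hm (Finset.mem_range.mp hl₂)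
      have e2 : (j₁ * m + l₁) / m = j₁ := gblock_div hm (Finset.mem_range.mp hl₁)
      rw [heq] at e1
      exact hne (e2.symm.trans e1)
    have hcard := Finset.card_biUnion hdisj
    have hcards : ∀ j ∈ J, ((Finset.range m).image (fun l => j * m + l)).card = m := by
      intro j _
      rw [Finset.card_image_of_injective _ (fun a b hab => by omega), Finset.card_range]
    calc m * J.card = ∑ j ∈ J, ((Finset.range m).image (fun l => j * m + l)).card := by
          rw [Finset.sum_congr rfl hcards, Finset.sum_const, smul_eq_mul, mul_comm]
      _ = (J.biUnion (fun j => (Finset.range m).image (fun l => j * m + l))).card := hcard.symm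
      _ ≤ Sfin.card := Finset.card_le_card hbi
  -- the competitor x₀
  set x₀ : ℕ → ℝ := fun j => if j ∈ J then x j else 0 with hx₀
  have hx₀fin : FinSupp x₀ := by
    refine Set.Finite.subset (J : Finset ℕ).finite_toSet ?_
    intro j hj
    simp only [Set.mem_setOf_eq, hx₀] at hj
    by_contra hjJ
    exact hj (if_neg hjJ)
  have hsuppx₀ : {j : ℕ | x₀ j ≠ 0} ⊆ (J : Finset ℕ) := by
    intro j hj
    simp only [Set.mem_setOf_eq, hx₀] at hj
    by_contra hjJ
    exact hj (if_neg hjJ)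
  have hx₀card : (suppCard x₀ : ℝ) ≤ t / M := by
    have h1 : suppCard x₀ ≤ J.card := by
      have := Set.ncard_le_ncard hsuppx₀ (J : Finset ℕ).finite_toSet
      simpa [suppCard, Set.ncard_coe_finset] using this
    have h2 : (Sfin.card : ℝ) ≤ t := by
      have : suppCard y₀ = Sfin.card := by
        simp [suppCard, hSfin, Set.ncard_eq_toFinset_card _ hy₀]
      rw [← this]
      exact hy₀c
    have h3 : (m : ℝ) * J.card ≤ t := by
      calc (m : ℝ) * J.card = ((m * J.card : ℕ) : ℝ) := by push_cast; ring
        _ ≤ (Sfin.card : ℝ) := by exact_mod_cast hcardJ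
        _ ≤ t := h2
    have hmR : (0 : ℝ) < m := by exact_mod_cast hm
    calc (suppCard x₀ : ℝ) ≤ (J.card : ℝ) := by exact_mod_cast h1
      _ ≤ t / m := by rw [le_div_iff₀ hmR]; linarith [h3]
      _ ≤ t / M := by
          apply div_le_div_of_nonneg_left (le_of_lt ht) hMpos hMm
  -- choice of witness coordinates in non-covered blocks
  have hch : ∀ j, j ∉ J → ∃ l, l < m ∧ y₀ (j * m + l) = 0 := by
    intro j hjJ
    by_contra hc
    push_neg at hc
    apply hjJ
    rw [hJ, Finset.mem_filter]
    constructor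
    · rw [Finset.mem_image]
      refine ⟨j * m + 0, ?_, gblock_div hm hm⟩
      simp only [hSfin, Set.Finite.mem_toFinset, Set.mem_setOf_eq]
      exact (Set.Finite.mem_toFinset hy₀).mpr (hc 0 hm)
    · intro l hl
      exact hc l hl
  set c : ℕ → ℕ := fun j => j * m + (if h : ∃ l, l < m ∧ y₀ (j * m + l) = 0 then h.choose else 0)
    with hc
  have hcl : ∀ j, (if h : ∃ l, l < m ∧ y₀ (j * m + l) = 0 then h.choose else 0) < m := by
    intro j
    split
    · next h => exact h.choose_spec.1
    · exact hm
  have hcdiv : ∀ j, c j / m = j := fun j => gblock_div hm (hcl j)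
  have hcinj : Function.Injective c := by
    intro a b hab
    have : c a / m = c b / m := by rw [hab]
    rwa [hcdiv, hcdiv] at this
  -- summability facts
  have hsub : MemL1 (x - x₀) := memL1_sub hx (finSupp_memL1 hx₀fin)
  have hdil : MemL1 (dilate m x) := memL1_dilate hx hm
  have hbig : MemL1 (dilate m x - y₀) := memL1_sub hdil (finSupp_memL1 hy₀)
  -- main comparison
  have hmain : (m : ℝ) * l1Norm (x - x₀) ≤ l1Norm (dilate m x - y₀) := by
    have := Summable.tsum_le_tsum_of_inj c hcinj
      (g := fun n => |(dilate m x - y₀) n|) (f := fun j => (m : ℝ) * |(x - x₀) j|)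
      (fun n _ => abs_nonneg _)
      (fun j => ?_) ?_ hbig
    · calc (m : ℝ) * l1Norm (x - x₀) = ∑' j, (m : ℝ) * |(x - x₀) j| := by
            rw [l1Norm, tsum_mul_left]
      _ ≤ ∑' n, |(dilate m x - y₀) n| := this
      _ = l1Norm (dilate m x - y₀) := rfl
    · -- pointwise bound
      show (m : ℝ) * |(x - x₀) j| ≤ |(dilate m x - y₀) (c j)|
      by_cases hj : j ∈ J
      · have : (x - x₀) j = 0 := by simp [hx₀, hj]
        rw [this]
        simp [abs_nonneg]
      · have hex : ∃ l, l < m ∧ y₀ (j * m + l) = 0 := hch j hj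
        have hy0 : y₀ (c j) = 0 := by
          simp only [hc, dif_pos hex]
          exact hex.choose_spec.2
        have hdil_c : dilate m x (c j) = (m : ℝ) * x j := by
          rw [dilate_apply hm, hcdiv]
        have hx₀j : x₀ j = 0 := if_neg hj
        simp only [Pi.sub_apply, hy0, hdil_c, hx₀j, sub_zero]
        rw [abs_mul, Nat.abs_cast]
    · exact Summable.mul_left _ hsub
  -- conclude
  have hE : Efun (t / M) x ≤ l1Norm (x - x₀) := Efun_le hx₀fin hx₀card
  have hnn : 0 ≤ l1Norm (x - x₀) := l1Norm_nonneg _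
  calc M * Efun (t / M) x ≤ M * l1Norm (x - x₀) :=
        mul_le_mul_of_nonneg_left hE (le_of_lt hMpos)
    _ ≤ (m : ℝ) * l1Norm (x - x₀) := mul_le_mul_of_nonneg_right hMm hnn
    _ ≤ l1Norm (dilate m x - y₀) := hmain

end EInterp
end
end Aux4
section Aux5
noncomputable section
namespace EInterp

variable {X : Set (ℕ → ℝ)} {N : (ℕ → ℝ) → ℝ}

/-- The backward direction of the main theorem. -/
lemma backward_direction (hri : IsRIGroup X N) (hl0 : ∀ x, FinSupp x → x ∈ X)
    (hl1 : ∀ x ∈ X, MemL1 x) {C : ℝ} (hC : 0 < C)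
    (hmain : ∀ b ∈ X, ∀ x : ℕ → ℝ, MemL1 x →
      (∀ t > (0 : ℝ), Efun t x ≤ Efun t b) → x ∈ X ∧ N x ≤ C * N b) :
    InterpGroup X N := by
  intro T hT hM
  obtain ⟨M, h1, h0⟩ := hM
  set M₁ : ℝ := max M 1 with hM₁
  have hM₁1 : 1 ≤ M₁ := le_max_right _ _
  have hM₁pos : (0 : ℝ) < M₁ := lt_of_lt_of_le one_pos hM₁1
  have h1' : L1BddBy T M₁ := by
    intro x hx
    refine ⟨(h1 x hx).1, le_trans (h1 x hx).2 ?_⟩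
    exact mul_le_mul_of_nonneg_right (le_max_left _ _) (l1Norm_nonneg _)
  have h0' : L0BddBy T M₁ := by
    intro x hx
    refine ⟨(h0 x hx).1, le_trans (h0 x hx).2 ?_⟩
    exact mul_le_mul_of_nonneg_right (le_max_left _ _) (Nat.cast_nonneg _)
  set m : ℕ := ⌈M₁⌉₊ with hm
  have hmpos : 0 < m := Nat.ceil_pos.mpr hM₁pos
  have hMm : M₁ ≤ (m : ℝ) := Nat.le_ceil _
  -- the key claim
  have key : ∀ x ∈ X, T x ∈ X ∧ N (T x) ≤ C * ((m : ℝ) ^ 2 * N x) := by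
    intro x hx
    have hxl1 : MemL1 x := hl1 x hx
    have hdil := X_dilate hri hl0 hx hmpos
    have hcomp : ∀ t > (0 : ℝ), Efun t (T x) ≤ Efun t (dilate m x) := by
      intro t ht
      calc Efun t (T x) ≤ M₁ * Efun (t / M₁) x := Efun_image_le hT h1' h0' hM₁1 hxl1 ht
        _ ≤ Efun t (dilate m x) := le_Efun_dilate hxl1 hmpos hM₁1 hMm ht
    have hTx : MemL1 (T x) := (h1' x hxl1).1
    have := hmain (dilate m x) hdil.1 (T x) hTx hcomp
    refine ⟨this.1, le_trans this.2 ?_⟩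
    exact mul_le_mul_of_nonneg_left hdil.2 (le_of_lt hC)
  refine ⟨fun x hx => (key x hx).1, C * (m : ℝ) ^ 2, ?_, fun x hx => ?_⟩
  · positivity
  · calc N (T x) ≤ C * ((m : ℝ) ^ 2 * N x) := (key x hx).2
      _ = C * (m : ℝ) ^ 2 * N x := by ring

end EInterp
end
end Aux5
section AuxF1
noncomputable section
namespace EInterp

/-! ### enumeration of a summable sequence in decreasing order of absolute value -/

lemma exists_max_off {v : ℕ → ℝ} (hv : MemL1 v) (F : Finset ℕ) :
    ∃ i, i ∉ F ∧ ∀ i', i' ∉ F → |v i'| ≤ |v i| := by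
  classical
  by_cases hz : ∀ i ∉ F, v i = 0
  · obtain ⟨i₀, hi₀⟩ := F.exists_notMem
    refine ⟨i₀, hi₀, fun i' hi' => ?_⟩
    rw [hz i' hi', hz i₀ hi₀]
  · push_neg at hz
    obtain ⟨i₀, hi₀F, hi₀⟩ := hz
    have hpos : (0 : ℝ) < |v i₀| := abs_pos.mpr hi₀
    have hev : ∀ᶠ i in Filter.cofinite, |v i| < |v i₀| :=
      hv.tendsto_cofinite_zero.eventually_lt_const hpos
    have hGfin : {i : ℕ | ¬ |v i| < |v i₀|}.Finite := hev
    set cand : Finset ℕ := hGfin.toFinset \ F with hcand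
    have hi₀c : i₀ ∈ cand := by
      simp only [hcand, Finset.mem_sdiff, Set.Finite.mem_toFinset, Set.mem_setOf_eq]
      exact ⟨by simp, hi₀F⟩
    obtain ⟨i, hic, hmax⟩ := Finset.exists_max_image cand (fun i => |v i|) ⟨i₀, hi₀c⟩
    refine ⟨i, ?_, fun i' hi' => ?_⟩
    · rw [hcand, Finset.mem_sdiff] at hic
      exact hic.2
    · by_cases hG : i' ∈ hGfin.toFinset
      · exact hmax i' (by rw [hcand, Finset.mem_sdiff]; exact ⟨hG, hi'⟩)
      · have : |v i'| < |v i₀| := by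
          simp only [Set.Finite.mem_toFinset, Set.mem_setOf_eq, not_not] at hG
          exact hG
        exact le_trans (le_of_lt this) (hmax i₀ hi₀c)

open Classical in
def pickMax (v : ℕ → ℝ) (F : Finset ℕ) : ℕ :=
  if h : ∃ i, i ∉ F ∧ ∀ i', i' ∉ F → |v i'| ≤ |v i| then h.choose else 0

def sigSet (v : ℕ → ℝ) : ℕ → Finset ℕ
  | 0 => ∅
  | n + 1 => insert (pickMax v (sigSet v n)) (sigSet v n)

/-- enumeration of indices in nonincreasing order of `|v|`. -/
def sig (v : ℕ → ℝ) (n : ℕ) : ℕ := pickMax v (sigSet v n)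

lemma sig_spec {v : ℕ → ℝ} (hv : MemL1 v) (n : ℕ) :
    sig v n ∉ sigSet v n ∧ ∀ i, i ∉ sigSet v n → |v i| ≤ |v (sig v n)| := by
  classical
  have h := exists_max_off hv (sigSet v n)
  rw [sig, pickMax, dif_pos h]
  exact ⟨h.choose_spec.1, h.choose_spec.2⟩

lemma sigSet_succ (v : ℕ → ℝ) (n : ℕ) :
    sigSet v (n + 1) = insert (sig v n) (sigSet v n) := rfl

lemma sigSet_mono (v : ℕ → ℝ) {m n : ℕ} (h : m ≤ n) : sigSet v m ⊆ sigSet v n := by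
  induction n with
  | zero => rw [Nat.le_zero.mp h]
  | succ n ih =>
    rcases Nat.lt_or_ge m (n + 1) with h' | h'
    · exact (ih (Nat.lt_succ_iff.mp h')).trans (by rw [sigSet_succ]; exact Finset.subset_insert _ _)
    · rw [Nat.le_antisymm h h']

lemma sig_mem_sigSet (v : ℕ → ℝ) {m n : ℕ} (h : m < n) : sig v m ∈ sigSet v n := by
  have : sig v m ∈ sigSet v (m + 1) := by rw [sigSet_succ]; exact Finset.mem_insert_self _ _
  exact sigSet_mono v h this

lemma sig_injective {v : ℕ → ℝ} (hv : MemL1 v) : Function.Injective (sig v) := by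
  intro a b hab
  by_contra hne
  rcases Nat.lt_or_ge a b with h | h
  · exact (sig_spec hv b).1 (hab ▸ sig_mem_sigSet v h)
  · have h' : b < a := by omega
    exact (sig_spec hv a).1 (hab ▸ sig_mem_sigSet v h')

lemma sigSet_card' {v : ℕ → ℝ} (hv : MemL1 v) (n : ℕ) : (sigSet v n).card = n := by
  induction n with
  | zero => rfl
  | succ n ih =>
    rw [sigSet_succ, Finset.card_insert_of_notMem (sig_spec hv n).1, ih]

lemma sig_abs_antitone {v : ℕ → ℝ} (hv : MemL1 v) : Antitone (fun n => |v (sig v n)|) := by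
  refine antitone_nat_of_succ_le (fun n => ?_)
  refine (sig_spec hv n).2 _ ?_
  intro hmem
  have : sig v (n+1) ∈ sigSet v (n+2) := sig_mem_sigSet v (Nat.lt_succ_self _)
  exact (sig_spec hv (n+1)).1 (sigSet_mono v (Nat.le_succ n) hmem)

lemma sigSet_eq_image (v : ℕ → ℝ) (n : ℕ) :
    sigSet v n = (Finset.range n).image (sig v) := by
  induction n with
  | zero => rfl
  | succ n ih =>
    rw [sigSet_succ, ih, Finset.range_add_one, Finset.image_insert]

/-- the enumerated top-`n` sum dominates any `n`-element sum. -/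
lemma top_sum {v : ℕ → ℝ} (hv : MemL1 v) :
    ∀ n : ℕ, ∀ S : Finset ℕ, S.card ≤ n →
      ∑ i ∈ S, |v i| ≤ ∑ k ∈ Finset.range n, |v (sig v k)| := by
  intro n
  induction n with
  | zero =>
    intro S hS
    rw [Finset.card_eq_zero.mp (Nat.le_zero.mp hS)]
    simp
  | succ n ih =>
    intro S hS
    by_cases hsub : S ⊆ sigSet v (n + 1)
    · calc ∑ i ∈ S, |v i| ≤ ∑ i ∈ sigSet v (n+1), |v i| :=
            Finset.sum_le_sum_of_subset_of_nonneg hsub (fun i _ _ => abs_nonneg _)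
        _ = ∑ k ∈ Finset.range (n+1), |v (sig v k)| := by
            rw [sigSet_eq_image]
            rw [Finset.sum_image (fun a _ b _ hab => sig_injective hv hab)]
    · obtain ⟨a, haS, hanot⟩ := Finset.not_subset.mp hsub
      have hbound : |v a| ≤ |v (sig v n)| :=
        (sig_spec hv n).2 a (fun hmem => hanot (sigSet_mono v (Nat.le_succ n) hmem))
      have hcard : (S.erase a).card ≤ n := by
        have := Finset.card_erase_of_mem haS
        omega
      calc ∑ i ∈ S, |v i| = ∑ i ∈ S.erase a, |v i| + |v a| :=
            (Finset.sum_erase_add S _ haS).symm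
        _ ≤ ∑ k ∈ Finset.range n, |v (sig v k)| + |v (sig v n)| := by
            exact add_le_add (ih _ hcard) hbound
        _ = ∑ k ∈ Finset.range (n+1), |v (sig v k)| := (Finset.sum_range_succ _ _).symm

/-- every index in the support is enumerated. -/
lemma supp_subset_range_sig {v : ℕ → ℝ} (hv : MemL1 v) {i : ℕ} (hi : v i ≠ 0) :
    ∃ k, sig v k = i := by
  classical
  by_contra hc
  push_neg at hc
  have hpos : (0 : ℝ) < |v i| := abs_pos.mpr hi
  have hev : ∀ᶠ j in Filter.cofinite, |v j| < |v i| :=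
    hv.tendsto_cofinite_zero.eventually_lt_const hpos
  have hGfin : {j : ℕ | ¬ |v j| < |v i|}.Finite := hev
  -- every sig v k has |v (sig v k)| ≥ |v i|, so sig maps ℕ injectively into a finite set
  have hmem : ∀ k, sig v k ∈ hGfin.toFinset := by
    intro k
    have hi_not : i ∉ sigSet v k := by
      intro hmem
      rw [sigSet_eq_image, Finset.mem_image] at hmem
      obtain ⟨k', _, hk'⟩ := hmem
      exact hc k' hk'
    have := (sig_spec hv k).2 i hi_not
    simp only [Set.Finite.mem_toFinset, Set.mem_setOf_eq]
    linarith
  have hinj := sig_injective hv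
  have : (Finset.range (hGfin.toFinset.card + 1)).card ≤ hGfin.toFinset.card := by
    have hsub : (Finset.range (hGfin.toFinset.card + 1)).image (sig v) ⊆ hGfin.toFinset :=
      fun j hj => by
        rw [Finset.mem_image] at hj
        obtain ⟨k, _, rfl⟩ := hj
        exact hmem k
    calc (Finset.range (hGfin.toFinset.card + 1)).card
        = ((Finset.range (hGfin.toFinset.card + 1)).image (sig v)).card :=
          (Finset.card_image_of_injective _ hinj).symm
      _ ≤ hGfin.toFinset.card := Finset.card_le_card hsub
  rw [Finset.card_range] at this
  omega

end EInterp
end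
end AuxF1
section AuxF2
noncomputable section
namespace EInterp

/-! ### the sorted sequence and the E-functional identity -/

def sorted (v : ℕ → ℝ) : ℕ → ℝ := fun k => |v (sig v k)|

def tau (f : ℕ → ℝ) (n : ℕ) : ℝ := ∑' i, f (i + n)

lemma sorted_nonneg (v : ℕ → ℝ) (k : ℕ) : 0 ≤ sorted v k := abs_nonneg _

lemma sorted_antitone {v : ℕ → ℝ} (hv : MemL1 v) : Antitone (sorted v) :=
  sig_abs_antitone hv

lemma summable_sorted {v : ℕ → ℝ} (hv : MemL1 v) : Summable (sorted v) := by
  have : sorted v = (fun i => |v i|) ∘ sig v := rfl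
  rw [this]
  exact hv.comp_injective (sig_injective hv)

lemma tsum_sorted {v : ℕ → ℝ} (hv : MemL1 v) : ∑' k, sorted v k = l1Norm v := by
  refine Function.Injective.tsum_eq (sig_injective hv) (f := fun i => |v i|) ?_
  intro i hi
  simp only [Function.mem_support] at hi
  have : v i ≠ 0 := fun h => hi (by simp [h])
  obtain ⟨k, hk⟩ := supp_subset_range_sig hv this
  exact ⟨k, hk⟩

lemma sum_sorted_add_tau {v : ℕ → ℝ} (hv : MemL1 v) (n : ℕ) :
    ∑ k ∈ Finset.range n, sorted v k + tau (sorted v) n = l1Norm v := by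
  rw [← tsum_sorted hv, tau]
  exact Summable.sum_add_tsum_nat_add n (summable_sorted hv)

lemma tau_nonneg {f : ℕ → ℝ} (hf : ∀ i, 0 ≤ f i) (n : ℕ) : 0 ≤ tau f n :=
  tsum_nonneg (fun i => hf _)

/-- identity `E(t, x) = ∑_{k ≥ ⌊t⌋} x*_k`. -/
lemma Efun_eq_tau {x : ℕ → ℝ} (hx : MemL1 x) {t : ℝ} (ht : 0 ≤ t) :
    Efun t x = tau (sorted x) ⌊t⌋₊ := by
  classical
  set n := ⌊t⌋₊ with hn
  have key : ∀ (S : Finset ℕ),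
      ∑' i, (if i ∈ S then (0:ℝ) else |x i|) = l1Norm x - ∑ i ∈ S, |x i| := by
    intro S
    have hg : Summable (fun i => if i ∈ S then |x i| else 0) :=
      summable_of_ne_finset_zero (s := S) (fun b hb => if_neg hb)
    have hsub : ∀ i, (if i ∈ S then (0:ℝ) else |x i|) = |x i| - (if i ∈ S then |x i| else 0) := by
      intro i
      by_cases h : i ∈ S <;> simp [h]
    calc ∑' i, (if i ∈ S then (0:ℝ) else |x i|)
        = ∑' i, (|x i| - (if i ∈ S then |x i| else 0)) := by
          exact tsum_congr hsub
      _ = l1Norm x - ∑' i, (if i ∈ S then |x i| else 0) := Summable.tsum_sub hx hg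
      _ = l1Norm x - ∑ i ∈ S, |x i| := by
          rw [tsum_eq_sum (s := S) (fun b hb => if_neg hb)]
          exact congrArg _ (Finset.sum_congr rfl fun b hb => if_pos hb)
  apply le_antisymm
  · -- upper bound via restriction to sigSet
    set x₀ : ℕ → ℝ := fun i => if i ∈ sigSet x n then x i else 0 with hx₀
    have hfin : FinSupp x₀ := by
      refine Set.Finite.subset (sigSet x n).finite_toSet (fun i hi => ?_)
      simp only [Set.mem_setOf_eq, hx₀] at hi
      by_contra h
      exact hi (if_neg h)
    have hcard : (suppCard x₀ : ℝ) ≤ t := by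
      have h1 : suppCard x₀ ≤ n := by
        have hs : {i : ℕ | x₀ i ≠ 0} ⊆ (sigSet x n : Finset ℕ) := by
          intro i hi
          simp only [Set.mem_setOf_eq, hx₀] at hi
          by_contra h
          exact hi (if_neg h)
        have := Set.ncard_le_ncard hs (sigSet x n).finite_toSet
        simpa [suppCard, Set.ncard_coe_finset, sigSet_card' hx] using this
      calc (suppCard x₀ : ℝ) ≤ (n : ℝ) := by exact_mod_cast h1
        _ ≤ t := Nat.floor_le ht
    refine le_trans (Efun_le hfin hcard) (le_of_eq ?_)
    have heq : ∀ i, (x - x₀) i = if i ∈ sigSet x n then (0:ℝ) else x i := by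
      intro i
      by_cases h : i ∈ sigSet x n <;> simp [hx₀, h]
    have habs : ∀ i, |(x - x₀) i| = if i ∈ sigSet x n then (0:ℝ) else |x i| := by
      intro i
      rw [heq i]
      by_cases h : i ∈ sigSet x n <;> simp [h]
    calc l1Norm (x - x₀) = ∑' i, (if i ∈ sigSet x n then (0:ℝ) else |x i|) := by
          rw [l1Norm]; exact tsum_congr habs
      _ = l1Norm x - ∑ i ∈ sigSet x n, |x i| := key _
      _ = l1Norm x - ∑ k ∈ Finset.range n, sorted x k := by
          rw [sigSet_eq_image, Finset.sum_image (fun a _ b _ hab => sig_injective hx hab)]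
          rfl
      _ = tau (sorted x) n := by linarith [sum_sorted_add_tau hx n]
  · -- lower bound
    refine le_Efun ht (fun y₀ hy₀ hy₀c => ?_)
    set S : Finset ℕ := hy₀.toFinset with hS
    have hScard : S.card ≤ n := by
      have : suppCard y₀ = S.card := by
        simp [suppCard, hS, Set.ncard_eq_toFinset_card _ hy₀]
      rw [hn]
      refine Nat.le_floor ?_
      rw [← this]
      exact hy₀c
    have hpt : ∀ i, (if i ∈ S then (0:ℝ) else |x i|) ≤ |(x - y₀) i| := by
      intro i
      by_cases h : i ∈ S
      · simp [h, abs_nonneg]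
      · have : y₀ i = 0 := by
          by_contra hne
          exact h ((Set.Finite.mem_toFinset hy₀).mpr hne)
        simp [h, this]
    have hsum1 : Summable (fun i => if i ∈ S then (0:ℝ) else |x i|) := by
      refine Summable.of_nonneg_of_le (fun i => ?_) (fun i => hpt i) (memL1_sub hx ?_)
      · by_cases h : i ∈ S <;> simp [h, abs_nonneg]
      · exact finSupp_memL1 hy₀
    calc tau (sorted x) n = l1Norm x - ∑ k ∈ Finset.range n, sorted x k := by
          linarith [sum_sorted_add_tau hx n]
      _ ≤ l1Norm x - ∑ i ∈ S, |x i| := by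
          have h2 := top_sum hx n S hScard
          have h3 : ∑ k ∈ Finset.range n, |x (sig x k)| = ∑ k ∈ Finset.range n, sorted x k := rfl
          rw [h3] at h2
          linarith
      _ = ∑' i, (if i ∈ S then (0:ℝ) else |x i|) := (key S).symm
      _ ≤ ∑' i, |(x - y₀) i| := Summable.tsum_le_tsum hpt hsum1 (memL1_sub hx (finSupp_memL1 hy₀))
      _ = l1Norm (x - y₀) := rfl

/-- the E-domination hypothesis transfers to tails of sorted sequences. -/
lemma tau_dom_of_Efun_le {x b : ℕ → ℝ} (hx : MemL1 x) (hb : MemL1 b)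
    (hE : ∀ t > (0:ℝ), Efun t x ≤ Efun t b) (n : ℕ) :
    tau (sorted x) n ≤ tau (sorted b) n := by
  rcases Nat.eq_zero_or_pos n with rfl | hn
  · have h := hE (1/2) (by norm_num)
    have hfl : ⌊(1/2 : ℝ)⌋₊ = 0 := by
      rw [Nat.floor_eq_zero]; norm_num
    rw [Efun_eq_tau hx (by norm_num), Efun_eq_tau hb (by norm_num), hfl] at h
    exact h
  · have hpos : (0:ℝ) < n := by exact_mod_cast hn
    have h := hE n hpos
    have hfl : ⌊(n : ℝ)⌋₊ = n := Nat.floor_natCast n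
    rw [Efun_eq_tau hx (le_of_lt hpos), Efun_eq_tau hb (le_of_lt hpos), hfl] at h
    exact h

end EInterp
end
end AuxF2
section AuxF3
noncomputable section
namespace EInterp
open Filter Topology

/-! ### tails -/

lemma summable_shift {f : ℕ → ℝ} (hf : Summable f) (n : ℕ) : Summable (fun i => f (i + n)) :=
  (summable_nat_add_iff n).mpr hf

lemma tau_succ {f : ℕ → ℝ} (hf : Summable f) (n : ℕ) :
    tau f n = f n + tau f (n + 1) := by
  rw [tau, Summable.tsum_eq_zero_add (summable_shift hf n)]
  congr 1
  · simp
  · rw [tau]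
    apply tsum_congr
    intro i
    congr 1
    omega

lemma tau_antitone {f : ℕ → ℝ} (hf0 : ∀ i, 0 ≤ f i) (hf : Summable f) : Antitone (tau f) := by
  refine antitone_nat_of_succ_le (fun n => ?_)
  rw [tau_succ hf n]
  linarith [hf0 n]

lemma tau_tendsto (f : ℕ → ℝ) : Tendsto (tau f) atTop (𝓝 0) :=
  tendsto_sum_nat_add f

/-! ### the overlap transport matrix -/

lemma clamp_overlap {a b α β : ℝ} (hab : a ≤ b) (hαβ : α ≤ β) :
    max 0 (min b β - max a α) = max a (min b β) - max a (min b α) := by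
  rcases le_total b β with h1 | h1 <;> rcases le_total a α with h2 | h2 <;>
    rcases le_total b α with h3 | h3 <;> rcases le_total a β with h4 | h4 <;>
      simp only [max_def, min_def] <;> split_ifs <;> linarith

def ovl (y c : ℕ → ℝ) (k j : ℕ) : ℝ :=
  max 0 (min (tau y k) (tau c j) - max (tau y (k + 1)) (tau c (j + 1)))

lemma ovl_nonneg (y c : ℕ → ℝ) (k j : ℕ) : 0 ≤ ovl y c k j := le_max_left _ _

section OvlFacts

variable {y c : ℕ → ℝ} (hy0 : ∀ i, 0 ≤ y i) (hys : Summable y)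
  (hc0 : ∀ i, 0 ≤ c i) (hcs : Summable c)
  (hcA : Antitone c) (hdom : ∀ n, tau y n ≤ tau c n)

include hc0 hcs in
lemma ovl_le_c (k j : ℕ) : ovl y c k j ≤ c j := by
  have h1 : tau c j = c j + tau c (j + 1) := tau_succ hcs j
  have h2 : 0 ≤ c j := hc0 j
  rw [ovl]
  apply max_le h2
  have h3 : min (tau y k) (tau c j) ≤ tau c j := min_le_right _ _
  have h4 : tau c (j+1) ≤ max (tau y (k+1)) (tau c (j+1)) := le_max_right _ _
  linarith

include hy0 hys in
lemma ovl_le_y (k j : ℕ) : ovl y c k j ≤ y k := by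
  have h1 : tau y k = y k + tau y (k + 1) := tau_succ hys k
  have h2 : 0 ≤ y k := hy0 k
  rw [ovl]
  apply max_le h2
  have h3 : min (tau y k) (tau c j) ≤ tau y k := min_le_left _ _
  have h4 : tau y (k+1) ≤ max (tau y (k+1)) (tau c (j+1)) := le_max_left _ _
  linarith

include hy0 hys hc0 hcs in
lemma ovl_eq_row (k j : ℕ) :
    ovl y c k j = max (tau y (k+1)) (min (tau y k) (tau c j))
      - max (tau y (k+1)) (min (tau y k) (tau c (j+1))) := by
  rw [ovl]
  exact clamp_overlap (tau_antitone hy0 hys (Nat.le_succ k)) (tau_antitone hc0 hcs (Nat.le_succ j))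

include hy0 hys hc0 hcs in
lemma ovl_eq_col (k j : ℕ) :
    ovl y c k j = max (tau c (j+1)) (min (tau c j) (tau y k))
      - max (tau c (j+1)) (min (tau c j) (tau y (k+1))) := by
  have h : ovl y c k j = max 0 (min (tau c j) (tau y k) - max (tau c (j+1)) (tau y (k+1))) := by
    rw [ovl, min_comm, max_comm (tau y (k+1))]
  rw [h]
  exact clamp_overlap (tau_antitone hc0 hcs (Nat.le_succ j)) (tau_antitone hy0 hys (Nat.le_succ k))

include hy0 hys hc0 hcs hdom in
lemma ovl_row_hasSum (k : ℕ) : HasSum (fun j => ovl y c k j) (y k) := by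
  set a := tau y (k+1) with ha
  set b := tau y k with hb
  set F : ℕ → ℝ := fun j => max a (min b (tau c j)) with hF
  have hpartial : ∀ J, ∑ j ∈ Finset.range J, ovl y c k j = F 0 - F J := by
    intro J
    have h : ∀ j ∈ Finset.range J, ovl y c k j = F j - F (j + 1) := by
      intro j _
      exact ovl_eq_row hy0 hys hc0 hcs k j
    rw [Finset.sum_congr rfl h, Finset.sum_range_sub' F J]
  have hab : a ≤ b := tau_antitone hy0 hys (Nat.le_succ k)
  have hF0 : F 0 = b := by
    have h1 : b ≤ tau c 0 := le_trans (hdom k) (tau_antitone hc0 hcs (Nat.zero_le k))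
    rw [hF]
    simp only
    rw [min_eq_left h1, max_eq_right hab]
  have haF : ∀ J, a ≤ F J := fun J => le_max_left _ _
  have hyk : b - a = y k := by
    have h := tau_succ hys k
    rw [← hb, ← ha] at h
    linarith
  have hsummable : Summable (fun j => ovl y c k j) := by
    refine summable_of_sum_range_le (fun j => ovl_nonneg y c k j) (c := y k) (fun J => ?_)
    rw [hpartial J, hF0]
    linarith [haF J]
  have hFlim : Tendsto F atTop (𝓝 a) := by
    have h1 : Tendsto (fun j => min b (tau c j)) atTop (𝓝 (min b 0)) :=
      tendsto_const_nhds.min (tau_tendsto c)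
    have h2 : Tendsto F atTop (𝓝 (max a (min b 0))) := tendsto_const_nhds.max h1
    have hb0 : 0 ≤ b := tau_nonneg hy0 k
    have ha0 : 0 ≤ a := tau_nonneg hy0 (k+1)
    have h3 : max a (min b 0) = a := by rw [min_eq_right hb0, max_eq_left ha0]
    rwa [h3] at h2
  rw [hsummable.hasSum_iff_tendsto_nat]
  have h4 : Tendsto (fun J => F 0 - F J) atTop (𝓝 (F 0 - a)) := tendsto_const_nhds.sub hFlim
  have h5 : F 0 - a = y k := by rw [hF0]; exact hyk
  rw [h5] at h4
  refine h4.congr (fun J => (hpartial J).symm)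

include hy0 hys hc0 hcs in
lemma ovl_col_summable (j : ℕ) :
    Summable (fun k => ovl y c k j) ∧ ∑' k, ovl y c k j ≤ c j := by
  set α := tau c (j+1) with hα
  set β := tau c j with hβ
  set G : ℕ → ℝ := fun k => max α (min β (tau y k)) with hG
  have hpartial : ∀ K, ∑ k ∈ Finset.range K, ovl y c k j = G 0 - G K := by
    intro K
    have h : ∀ k ∈ Finset.range K, ovl y c k j = G k - G (k + 1) := by
      intro k _
      exact ovl_eq_col hy0 hys hc0 hcs k j
    rw [Finset.sum_congr rfl h, Finset.sum_range_sub' G K]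
  have hαβ : α ≤ β := tau_antitone hc0 hcs (Nat.le_succ j)
  have hcj : β - α = c j := by
    have h := tau_succ hcs j
    rw [← hβ, ← hα] at h
    linarith
  have hbound : ∀ K, ∑ k ∈ Finset.range K, ovl y c k j ≤ c j := by
    intro K
    rw [hpartial K]
    have h1 : G 0 ≤ β := max_le hαβ (min_le_left _ _)
    have h2 : α ≤ G K := le_max_left _ _
    linarith
  have hsummable : Summable (fun k => ovl y c k j) :=
    summable_of_sum_range_le (fun k => ovl_nonneg y c k j) hbound
  exact ⟨hsummable, Summable.tsum_le_of_sum_range_le hsummable hbound⟩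

include hy0 hys hc0 hcs hcA hdom in
lemma ovl_no_three {j k₁ k₂ k₃ : ℕ} (h12 : k₁ < k₂) (h23 : k₂ < k₃)
    (hD : c k₂ < y k₂) (h1 : ovl y c k₁ j ≠ 0) (h2 : ovl y c k₂ j ≠ 0)
    (h3 : ovl y c k₃ j ≠ 0) : False := by
  have hpos : ∀ k, ovl y c k j ≠ 0 →
      max (tau y (k+1)) (tau c (j+1)) < min (tau y k) (tau c j) := by
    intro k hk
    rw [ovl] at hk
    by_contra hle
    push_neg at hle
    exact hk (max_eq_left (by linarith) )
  have p1 := hpos k₁ h1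
  have p2 := hpos k₂ h2
  have p3 := hpos k₃ h3
  -- from k₃ : tau y k₃ > tau c (j+1)
  have q3 : tau c (j+1) < tau y k₃ :=
    lt_of_le_of_lt (le_max_right _ _) (lt_of_lt_of_le p3 (min_le_left _ _))
  have q3' : tau c (j+1) < tau y (k₂+1) :=
    lt_of_lt_of_le q3 (tau_antitone hy0 hys (by omega))
  -- hence k₂ < j
  have hk2j : k₂ < j := by
    by_contra hge
    push_neg at hge
    have : tau c (k₂+1) ≤ tau c (j+1) := tau_antitone hc0 hcs (by omega)
    have hdom2 := hdom (k₂+1)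
    linarith
  -- from k₁ : tau y k₂ < tau c j
  have q1 : tau y (k₁+1) < tau c j :=
    lt_of_le_of_lt (le_max_left _ _) (lt_of_lt_of_le p1 (min_le_right _ _))
  have q1' : tau y k₂ < tau c j :=
    lt_of_le_of_lt (tau_antitone hy0 hys (by omega)) q1
  -- combine
  have hy2 : y k₂ = tau y k₂ - tau y (k₂+1) := by
    have h := tau_succ hys k₂
    linarith
  have hcj : c j = tau c j - tau c (j+1) := by
    have h := tau_succ hcs j
    linarith
  have hcc : c j ≤ c k₂ := hcA (le_of_lt hk2j)
  have : y k₂ < c j := by rw [hy2, hcj]; linarith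
  linarith

end OvlFacts

/-! ### a set with no increasing triple has at most 2 elements -/

lemma ncard_le_two_of_no_three {S : Set ℕ}
    (h : ∀ a b c, a ∈ S → b ∈ S → c ∈ S → a < b → b < c → False) :
    S.Finite ∧ S.ncard ≤ 2 := by
  have tri : ∀ u v w, u ∈ S → v ∈ S → w ∈ S → u ≠ v → v ≠ w → u ≠ w → False := by
    intro u v w hu hv hw huv hvw huw
    rcases Nat.lt_trichotomy u v with h1 | h1 | h1
    · rcases Nat.lt_trichotomy v w with h2 | h2 | h2
      · exact h u v w hu hv hw h1 h2
      · exact hvw h2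
      · rcases Nat.lt_trichotomy u w with h3 | h3 | h3
        · exact h u w v hu hw hv h3 h2
        · exact huw h3
        · exact h w u v hw hu hv h3 h1
    · exact huv h1
    · rcases Nat.lt_trichotomy u w with h2 | h2 | h2
      · exact h v u w hv hu hw h1 h2
      · exact huw h2
      · rcases Nat.lt_trichotomy v w with h3 | h3 | h3
        · exact h v w u hv hw hu h3 h2
        · exact hvw h3
        · exact h w v u hw hv hu h3 h1
  by_cases hne : S.Nonempty
  · obtain ⟨a, ha⟩ := hne
    by_cases h2 : ∃ b ∈ S, b ≠ a
    · obtain ⟨b, hb, hba⟩ := h2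
      have hsub : S ⊆ {a, b} := by
        intro r hr
        by_contra hrab
        simp only [Set.mem_insert_iff, Set.mem_singleton_iff] at hrab
        push_neg at hrab
        exact tri r a b hr ha hb hrab.1 (Ne.symm hba) hrab.2
      have hfin : ({a, b} : Set ℕ).Finite := (Set.finite_singleton b).insert a
      refine ⟨hfin.subset hsub, ?_⟩
      calc S.ncard ≤ ({a, b} : Set ℕ).ncard := Set.ncard_le_ncard hsub hfin
        _ ≤ ({b} : Set ℕ).ncard + 1 := Set.ncard_insert_le _ _
        _ ≤ 2 := by rw [Set.ncard_singleton]
    · push_neg at h2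
      have hsub : S ⊆ {a} := fun r hr => h2 r hr
      have hfin : ({a} : Set ℕ).Finite := Set.finite_singleton a
      refine ⟨hfin.subset hsub, ?_⟩
      calc S.ncard ≤ ({a} : Set ℕ).ncard := Set.ncard_le_ncard hsub hfin
        _ ≤ 2 := by rw [Set.ncard_singleton]; omega
  · rw [Set.not_nonempty_iff_eq_empty] at hne
    rw [hne]
    simp

end EInterp
end
end AuxF3
section AuxF4
noncomputable section
namespace EInterp
open Filter Topology

/-! ### the combined transport matrix -/

def tmat (y c : ℕ → ℝ) (k j : ℕ) : ℝ :=
  if y k ≤ c k then (if j = k then y k / c k else 0) else ovl y c k j / c j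

section TmatFacts

variable {y c : ℕ → ℝ} (hy0 : ∀ i, 0 ≤ y i) (hys : Summable y)
  (hc0 : ∀ i, 0 ≤ c i) (hcs : Summable c)
  (hcA : Antitone c) (hdom : ∀ n, tau y n ≤ tau c n)

include hy0 hc0 in
lemma tmat_nonneg (k j : ℕ) : 0 ≤ tmat y c k j := by
  rw [tmat]
  split_ifs with h1 h2
  · exact div_nonneg (hy0 k) (hc0 k)
  · exact le_refl 0
  · exact div_nonneg (ovl_nonneg y c k j) (hc0 j)

include hy0 hc0 hcs in
lemma tmat_le_one (k j : ℕ) : tmat y c k j ≤ 1 := by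
  rw [tmat]
  split_ifs with h1 h2
  · rcases eq_or_lt_of_le (hc0 k) with hck | hck
    · have : y k = 0 := le_antisymm (hck ▸ h1) (hy0 k)
      rw [this]
      simp
    · exact (div_le_one hck).mpr h1
  · norm_num
  · rcases eq_or_lt_of_le (hc0 j) with hcj | hcj
    · have h0 : ovl y c k j = 0 :=
        le_antisymm (hcj ▸ ovl_le_c hc0 hcs k j) (ovl_nonneg y c k j)
      rw [h0]
      simp
    · exact (div_le_one hcj).mpr (ovl_le_c hc0 hcs k j)

include hy0 hys hc0 hcs in
lemma tmat_col (j : ℕ) :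
    Summable (fun k => tmat y c k j) ∧ ∑' k, tmat y c k j ≤ 2 := by
  classical
  have hcol := ovl_col_summable hy0 hys hc0 hcs (c := c) j
  have hsplit : ∀ k, tmat y c k j ≤ (if k = j then (1:ℝ) else 0) + ovl y c k j / c j := by
    intro k
    have hdivnn : 0 ≤ ovl y c k j / c j := div_nonneg (ovl_nonneg y c k j) (hc0 j)
    rw [tmat]
    split_ifs with h1 h2 h3
    · -- diagonal entry, j = k so k = j
      have h4 : y k / c k ≤ 1 := by
        rcases eq_or_lt_of_le (hc0 k) with hck | hck
        · have : y k = 0 := le_antisymm (hck ▸ h1) (hy0 k)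
          rw [this]; simp
        · exact (div_le_one hck).mpr h1
      linarith
    · -- j = k but k ≠ j : contradiction
      omega
    · exact le_trans hdivnn (by linarith [hdivnn])
    · have : (0:ℝ) ≤ 1 := by norm_num
      linarith
    · linarith
    · linarith
  have hRHSsum : Summable (fun k => (if k = j then (1:ℝ) else 0) + ovl y c k j / c j) := by
    refine Summable.add ?_ ?_
    · exact summable_of_ne_finset_zero (s := {j}) (fun b hb => if_neg (by simpa using hb))
    · have := hcol.1.mul_right (c j)⁻¹
      simpa [div_eq_mul_inv] using this
  have hsummable : Summable (fun k => tmat y c k j) :=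
    Summable.of_nonneg_of_le (fun k => tmat_nonneg hy0 hc0 k j) hsplit hRHSsum
  refine ⟨hsummable, ?_⟩
  have hite : Summable (fun k => (if k = j then (1:ℝ) else 0)) :=
    summable_of_ne_finset_zero (s := {j}) (fun b hb => if_neg (by simpa using hb))
  have hovl : Summable (fun k => ovl y c k j / c j) := by
    have := hcol.1.mul_right (c j)⁻¹
    simpa [div_eq_mul_inv] using this
  calc ∑' k, tmat y c k j
      ≤ ∑' k, ((if k = j then (1:ℝ) else 0) + ovl y c k j / c j) :=
        Summable.tsum_le_tsum hsplit hsummable hRHSsum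
    _ = (∑' k, (if k = j then (1:ℝ) else 0)) + ∑' k, ovl y c k j / c j :=
        Summable.tsum_add hite hovl
    _ ≤ 1 + 1 := by
        refine add_le_add (le_of_eq (tsum_ite_eq j (fun _ => (1:ℝ)))) ?_
        rcases eq_or_lt_of_le (hc0 j) with hcj | hcj
        · have h0 : ∀ k, ovl y c k j / c j = 0 := by
            intro k
            have : ovl y c k j = 0 :=
              le_antisymm (hcj ▸ ovl_le_c hc0 hcs k j) (ovl_nonneg y c k j)
            rw [this, zero_div]
          rw [tsum_congr h0]
          simp
        · have h1 : ∑' k, ovl y c k j / c j = (∑' k, ovl y c k j) * (c j)⁻¹ := by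
            rw [← tsum_mul_right]
            exact tsum_congr (fun k => by rw [div_eq_mul_inv])
          rw [h1]
          calc (∑' k, ovl y c k j) * (c j)⁻¹ ≤ c j * (c j)⁻¹ :=
                mul_le_mul_of_nonneg_right hcol.2 (by positivity)
            _ = 1 := mul_inv_cancel₀ (ne_of_gt hcj)
    _ = 2 := by norm_num

include hy0 hys hc0 hcs hcA hdom in
lemma tmat_colcount (j : ℕ) :
    {k | tmat y c k j ≠ 0}.Finite ∧ {k | tmat y c k j ≠ 0}.ncard ≤ 3 := by
  set S' : Set ℕ := {k | c k < y k ∧ ovl y c k j ≠ 0} with hS'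
  have hS'2 := ncard_le_two_of_no_three (S := S') (by
    rintro a b d ⟨_, ha2⟩ ⟨hb1, hb2⟩ ⟨_, hd2⟩ hab hbd
    exact ovl_no_three hy0 hys hc0 hcs hcA hdom hab hbd hb1 ha2 hb2 hd2)
  have hsub : {k | tmat y c k j ≠ 0} ⊆ insert j S' := by
    intro k hk
    simp only [Set.mem_setOf_eq, tmat] at hk
    split_ifs at hk with h1 h2
    · exact Or.inl (by omega)
    · exact absurd rfl hk
    · refine Or.inr ⟨lt_of_not_ge h1, ?_⟩
      intro h0
      exact hk (by rw [h0, zero_div])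
  have hfin : (insert j S').Finite := hS'2.1.insert j
  refine ⟨hfin.subset hsub, ?_⟩
  calc {k | tmat y c k j ≠ 0}.ncard ≤ (insert j S').ncard := Set.ncard_le_ncard hsub hfin
    _ ≤ S'.ncard + 1 := Set.ncard_insert_le _ _
    _ ≤ 3 := by omega

include hy0 hys hc0 hcs hdom in
lemma tmat_row_c (k : ℕ) : ∑' j, tmat y c k j * c j = y k := by
  classical
  by_cases h1 : y k ≤ c k
  · have heq : ∀ j, tmat y c k j * c j = if j = k then y k / c k * c k else 0 := by
      intro j
      rw [tmat, if_pos h1]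
      split_ifs with h2
      · rw [h2]
      · rw [zero_mul]
    rw [tsum_congr heq, tsum_ite_eq k (fun _ => y k / c k * c k)]
    rcases eq_or_lt_of_le (hc0 k) with hck | hck
    · have : y k = 0 := le_antisymm (hck ▸ h1) (hy0 k)
      rw [this, ← hck]
      simp
    · field_simp
  · have heq : ∀ j, tmat y c k j * c j = ovl y c k j := by
      intro j
      rw [tmat, if_neg h1]
      rcases eq_or_lt_of_le (hc0 j) with hcj | hcj
      · have h0 : ovl y c k j = 0 :=
          le_antisymm (hcj ▸ ovl_le_c hc0 hcs k j) (ovl_nonneg y c k j)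
        rw [h0, zero_div, zero_mul]
      · field_simp
    rw [tsum_congr heq]
    exact (ovl_row_hasSum hy0 hys hc0 hcs hdom k).tsum_eq

end TmatFacts

end EInterp
end
end AuxF4
section AuxF5
noncomputable section
namespace EInterp
open Filter Topology

/-! ### generic matrix operators -/

def matOp (t : ℕ → ℕ → ℝ) (u : ℕ → ℝ) : ℕ → ℝ := fun k => ∑' j, t k j * u j

section MatOpFacts

variable {t : ℕ → ℕ → ℝ} (hA : ∀ k j, |t k j| ≤ 1)

include hA in
lemma matOp_row_abs_summable {u : ℕ → ℝ} (hu : MemL1 u) (k : ℕ) :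
    Summable (fun j => |t k j * u j|) := by
  refine Summable.of_nonneg_of_le (fun j => abs_nonneg _) (fun j => ?_) hu
  rw [abs_mul]
  calc |t k j| * |u j| ≤ 1 * |u j| :=
        mul_le_mul_of_nonneg_right (hA k j) (abs_nonneg _)
    _ = |u j| := one_mul _

include hA in
lemma matOp_row_summable {u : ℕ → ℝ} (hu : MemL1 u) (k : ℕ) :
    Summable (fun j => t k j * u j) :=
  (matOp_row_abs_summable hA hu k).of_abs

include hA in
lemma matOp_add {u v : ℕ → ℝ} (hu : MemL1 u) (hv : MemL1 v) :
    matOp t (u + v) = matOp t u + matOp t v := by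
  funext k
  simp only [matOp, Pi.add_apply, mul_add]
  exact Summable.tsum_add (matOp_row_summable hA hu k) (matOp_row_summable hA hv k)

lemma matOp_neg (u : ℕ → ℝ) : matOp t (-u) = -(matOp t u) := by
  funext k
  simp only [matOp, Pi.neg_apply]
  rw [← tsum_neg]
  exact tsum_congr (fun j => by ring)

lemma matOp_zero : matOp t 0 = 0 := by
  funext k
  simp [matOp]

include hA in
lemma matOp_l1 {Ms : ℝ} (hB : ∀ j, Summable (fun k => |t k j|) ∧ ∑' k, |t k j| ≤ Ms)
    {u : ℕ → ℝ} (hu : MemL1 u) :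
    MemL1 (matOp t u) ∧ l1Norm (matOp t u) ≤ Ms * l1Norm u := by
  have habs : ∀ k, |matOp t u k| ≤ ∑' j, |t k j * u j| := by
    intro k
    have := norm_tsum_le_tsum_norm (f := fun j => t k j * u j)
      (matOp_row_abs_summable hA hu k)
    simpa [Real.norm_eq_abs, abs_mul, matOp] using this
  have hbound : ∀ K, ∑ k ∈ Finset.range K, |matOp t u k| ≤ Ms * l1Norm u := by
    intro K
    have hswap : ∑ k ∈ Finset.range K, ∑' j, |t k j * u j|
        = ∑' j, ∑ k ∈ Finset.range K, |t k j * u j| :=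
      (Summable.tsum_finsetSum (fun k _ => matOp_row_abs_summable hA hu k)).symm
    have hinner : ∀ j, ∑ k ∈ Finset.range K, |t k j * u j| ≤ Ms * |u j| := by
      intro j
      have h1 : ∑ k ∈ Finset.range K, |t k j| ≤ Ms :=
        le_trans (Summable.sum_le_tsum _ (fun k _ => abs_nonneg _) (hB j).1) (hB j).2
      calc ∑ k ∈ Finset.range K, |t k j * u j|
          = (∑ k ∈ Finset.range K, |t k j|) * |u j| := by
            rw [Finset.sum_mul]
            exact Finset.sum_congr rfl (fun k _ => abs_mul _ _)
        _ ≤ Ms * |u j| := mul_le_mul_of_nonneg_right h1 (abs_nonneg _)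
    have hsum1 : Summable (fun j => ∑ k ∈ Finset.range K, |t k j * u j|) :=
      summable_sum (fun k _ => matOp_row_abs_summable hA hu k)
    calc ∑ k ∈ Finset.range K, |matOp t u k|
        ≤ ∑ k ∈ Finset.range K, ∑' j, |t k j * u j| :=
          Finset.sum_le_sum (fun k _ => habs k)
      _ = ∑' j, ∑ k ∈ Finset.range K, |t k j * u j| := hswap
      _ ≤ ∑' j, Ms * |u j| := Summable.tsum_le_tsum hinner hsum1 (hu.mul_left Ms)
      _ = Ms * l1Norm u := tsum_mul_left
  have hsummable : MemL1 (matOp t u) :=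
    summable_of_sum_range_le (fun k => abs_nonneg _) hbound
  exact ⟨hsummable, Summable.tsum_le_of_sum_range_le hsummable hbound⟩

lemma ncard_biUnion_le (F : Finset ℕ) (A : ℕ → Set ℕ) :
    (⋃ j ∈ F, A j).ncard ≤ ∑ j ∈ F, (A j).ncard := by
  classical
  induction F using Finset.induction_on with
  | empty => simp
  | @insert a s ha ih =>
    rw [Finset.sum_insert ha]
    have : (⋃ j ∈ insert a s, A j) = A a ∪ ⋃ j ∈ s, A j := by
      simp [Set.biUnion_insert]
    rw [this]
    calc (A a ∪ ⋃ j ∈ s, A j).ncard ≤ (A a).ncard + (⋃ j ∈ s, A j).ncard :=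
          Set.ncard_union_le _ _
      _ ≤ (A a).ncard + ∑ j ∈ s, (A j).ncard := by omega

lemma matOp_l0 {Mc : ℕ}
    (hC : ∀ j, {k | t k j ≠ 0}.Finite ∧ {k | t k j ≠ 0}.ncard ≤ Mc)
    {u : ℕ → ℝ} (hu : FinSupp u) :
    FinSupp (matOp t u) ∧ (suppCard (matOp t u) : ℝ) ≤ (Mc : ℝ) * suppCard u := by
  classical
  set F : Finset ℕ := hu.toFinset with hF
  have hsub : {k | matOp t u k ≠ 0} ⊆ ⋃ j ∈ F, {k | t k j ≠ 0} := by
    intro k hk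
    simp only [Set.mem_setOf_eq, matOp] at hk
    have : ∃ j, t k j * u j ≠ 0 := by
      by_contra hno
      push_neg at hno
      exact hk (by rw [tsum_congr hno]; exact tsum_zero)
    obtain ⟨j, hj⟩ := this
    have hu' : u j ≠ 0 := fun h => hj (by rw [h, mul_zero])
    have ht' : t k j ≠ 0 := fun h => hj (by rw [h, zero_mul])
    have hjF : j ∈ F := by
      rw [hF]; refine (Set.Finite.mem_toFinset hu).mpr ?_
      exact hu'
    exact Set.mem_biUnion hjF ht'
  have hfinU : (⋃ j ∈ F, {k | t k j ≠ 0}).Finite :=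
    Set.Finite.biUnion F.finite_toSet (fun j _ => (hC j).1)
  refine ⟨hfinU.subset hsub, ?_⟩
  have h1 : suppCard (matOp t u) ≤ ∑ j ∈ F, {k | t k j ≠ 0}.ncard := by
    calc suppCard (matOp t u) ≤ (⋃ j ∈ F, {k | t k j ≠ 0}).ncard :=
          Set.ncard_le_ncard hsub hfinU
      _ ≤ ∑ j ∈ F, {k | t k j ≠ 0}.ncard := ncard_biUnion_le F _
  have h2 : ∑ j ∈ F, {k | t k j ≠ 0}.ncard ≤ Mc * F.card := by
    calc ∑ j ∈ F, {k | t k j ≠ 0}.ncard ≤ ∑ _j ∈ F, Mc :=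
          Finset.sum_le_sum (fun j _ => (hC j).2)
      _ = Mc * F.card := by rw [Finset.sum_const, smul_eq_mul, mul_comm]
  have h3 : F.card = suppCard u := by
    simp [hF, suppCard, Set.ncard_eq_toFinset_card _ hu]
  calc (suppCard (matOp t u) : ℝ) ≤ ((Mc * F.card : ℕ) : ℝ) := by
        exact_mod_cast le_trans h1 h2
    _ = (Mc : ℝ) * suppCard u := by rw [← h3]; push_cast; ring

end MatOpFacts

end EInterp
end
end AuxF5
section AuxF6
noncomputable section
namespace EInterp
open Filter Topology

/-! ### the sorting and unsorting maps -/

def Umap (b : ℕ → ℝ) (u : ℕ → ℝ) : ℕ → ℝ :=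
  fun n => if b (sig b n) < 0 then -u (sig b n) else u (sig b n)

lemma Umap_self {b : ℕ → ℝ} : Umap b b = sorted b := by
  funext n
  rw [Umap, sorted]
  split_ifs with h
  · rw [abs_of_neg h]
  · rw [abs_of_nonneg (le_of_not_gt h)]

lemma Umap_add (b u v : ℕ → ℝ) : Umap b (u + v) = Umap b u + Umap b v := by
  funext n
  simp only [Umap, Pi.add_apply]
  split_ifs <;> ring

lemma Umap_neg (b u : ℕ → ℝ) : Umap b (-u) = -(Umap b u) := by
  funext n
  simp only [Umap, Pi.neg_apply]
  split_ifs <;> ring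

lemma Umap_abs (b u : ℕ → ℝ) (n : ℕ) : |Umap b u n| = |u (sig b n)| := by
  rw [Umap]
  split_ifs <;> simp [abs_neg]

lemma Umap_l1 {b : ℕ → ℝ} (hb : MemL1 b) {u : ℕ → ℝ} (hu : MemL1 u) :
    MemL1 (Umap b u) ∧ l1Norm (Umap b u) ≤ l1Norm u := by
  have hsum : Summable (fun n => |Umap b u n|) := by
    refine ((hu.comp_injective (sig_injective hb))).congr (fun n => ?_)
    rw [Umap_abs]
    rfl
  refine ⟨hsum, ?_⟩
  refine Summable.tsum_le_tsum_of_inj (sig b) (sig_injective hb) (fun n _ => abs_nonneg _)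
    (fun n => ?_) hsum hu
  rw [Umap_abs]

lemma Umap_l0 {b : ℕ → ℝ} (hb : MemL1 b) {u : ℕ → ℝ} (hu : FinSupp u) :
    FinSupp (Umap b u) ∧ suppCard (Umap b u) ≤ suppCard u := by
  have hsub : {n | Umap b u n ≠ 0} ⊆ (sig b) ⁻¹' {i | u i ≠ 0} := by
    intro n hn
    simp only [Set.mem_setOf_eq, Umap] at hn
    simp only [Set.mem_preimage, Set.mem_setOf_eq]
    intro h0
    apply hn
    split_ifs <;> simp [h0]
  have hpre : ((sig b) ⁻¹' {i | u i ≠ 0}).Finite :=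
    Set.Finite.preimage ((sig_injective hb).injOn) hu
  refine ⟨hpre.subset hsub, ?_⟩
  refine Set.ncard_le_ncard_of_injOn (sig b) (fun n hn => hsub hn) ?_ hu
  exact (sig_injective hb).injOn

open Classical in
def rho (x : ℕ → ℝ) (i : ℕ) : ℕ := if h : ∃ k, sig x k = i then h.choose else 0

lemma sig_rho {x : ℕ → ℝ} (hx : MemL1 x) {i : ℕ} (hi : x i ≠ 0) :
    sig x (rho x i) = i := by
  have h : ∃ k, sig x k = i := supp_subset_range_sig hx hi
  rw [rho, dif_pos h]
  exact h.choose_spec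

lemma rho_injOn {x : ℕ → ℝ} (hx : MemL1 x) :
    Set.InjOn (rho x) {i | x i ≠ 0} := by
  intro i hi i' hi' h
  have h1 := sig_rho hx hi
  have h2 := sig_rho hx hi'
  rw [← h1, ← h2, h]

def Vmap (x : ℕ → ℝ) (v : ℕ → ℝ) : ℕ → ℝ :=
  fun i => if x i = 0 then 0 else (if x i < 0 then -v (rho x i) else v (rho x i))

lemma Vmap_sorted {x : ℕ → ℝ} (hx : MemL1 x) : Vmap x (sorted x) = x := by
  funext i
  rw [Vmap]
  by_cases h0 : x i = 0
  · rw [if_pos h0, h0]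
  · rw [if_neg h0]
    have habs : sorted x (rho x i) = |x i| := by
      rw [sorted, sig_rho hx h0]
    rw [habs]
    split_ifs with h1
    · rw [abs_of_neg h1]; ring
    · rw [abs_of_nonneg (le_of_not_gt h1)]

lemma Vmap_add (x u v : ℕ → ℝ) : Vmap x (u + v) = Vmap x u + Vmap x v := by
  funext i
  simp only [Vmap, Pi.add_apply]
  split_ifs <;> ring

lemma Vmap_neg (x u : ℕ → ℝ) : Vmap x (-u) = -(Vmap x u) := by
  funext i
  simp only [Vmap, Pi.neg_apply]
  split_ifs <;> ring

lemma Vmap_abs (x v : ℕ → ℝ) (i : ℕ) :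
    |Vmap x v i| = if x i = 0 then 0 else |v (rho x i)| := by
  rw [Vmap]
  split_ifs <;> simp [abs_neg]

lemma Vmap_l1 {x : ℕ → ℝ} (hx : MemL1 x) {v : ℕ → ℝ} (hv : MemL1 v) :
    MemL1 (Vmap x v) ∧ l1Norm (Vmap x v) ≤ l1Norm v := by
  classical
  have hbound : ∀ K, ∑ i ∈ Finset.range K, |Vmap x v i| ≤ l1Norm v := by
    intro K
    set F : Finset ℕ := (Finset.range K).filter (fun i => x i ≠ 0) with hF
    have h1 : ∑ i ∈ Finset.range K, |Vmap x v i| = ∑ i ∈ F, |v (rho x i)| := by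
      rw [hF, Finset.sum_filter]
      refine Finset.sum_congr rfl (fun i _ => ?_)
      rw [Vmap_abs]
      by_cases h : x i = 0 <;> simp [h]
    have hinj : Set.InjOn (rho x) (F : Set ℕ) := by
      refine (rho_injOn hx).mono ?_
      intro i hi
      simp only [hF, Finset.coe_filter, Set.mem_setOf_eq] at hi
      exact hi.2
    have h2 : ∑ i ∈ F, |v (rho x i)| = ∑ j ∈ F.image (rho x), |v j| := by
      rw [Finset.sum_image ?_]
      intro a ha b hb hab
      exact hinj (by simpa using ha) (by simpa using hb) hab
    rw [h1, h2]
    exact Summable.sum_le_tsum _ (fun j _ => abs_nonneg _) hv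
  have hsum : MemL1 (Vmap x v) :=
    summable_of_sum_range_le (fun i => abs_nonneg _) hbound
  exact ⟨hsum, Summable.tsum_le_of_sum_range_le hsum hbound⟩

lemma Vmap_l0 {x : ℕ → ℝ} (hx : MemL1 x) {v : ℕ → ℝ} (hv : FinSupp v) :
    FinSupp (Vmap x v) ∧ suppCard (Vmap x v) ≤ suppCard v := by
  set S : Set ℕ := {i | x i ≠ 0 ∧ v (rho x i) ≠ 0} with hS
  have hsub : {i | Vmap x v i ≠ 0} ⊆ S := by
    intro i hi
    simp only [Set.mem_setOf_eq, Vmap] at hi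
    by_cases h0 : x i = 0
    · exact absurd (if_pos h0) hi
    · refine ⟨h0, fun hv0 => ?_⟩
      apply hi
      rw [if_neg h0, hv0]
      split_ifs <;> simp
  have hmaps : ∀ i ∈ S, rho x i ∈ {j | v j ≠ 0} := fun i hi => hi.2
  have hinj : Set.InjOn (rho x) S := (rho_injOn hx).mono (fun i hi => hi.1)
  have hSfin : S.Finite := by
    have himg : ((rho x) '' S).Finite := hv.subset (by
      rintro j ⟨i, hi, rfl⟩
      exact hi.2)
    exact Set.Finite.of_finite_image himg hinj
  refine ⟨hSfin.subset hsub, ?_⟩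
  calc suppCard (Vmap x v) ≤ S.ncard := Set.ncard_le_ncard hsub hSfin
    _ ≤ suppCard v := Set.ncard_le_ncard_of_injOn (rho x) hmaps hinj hv

/-! ### totalization of a partially defined homomorphism -/

def l1Submodule : Submodule ℚ (ℕ → ℝ) where
  carrier := {u | MemL1 u}
  add_mem' := fun hu hv => memL1_add hu hv
  zero_mem' := finSupp_memL1 finSupp_zero
  smul_mem' := by
    intro q u hu
    have h : ∀ i, |(q • u) i| = |(q : ℝ)| * |u i| := by
      intro i
      rw [Pi.smul_apply, Rat.smul_def, abs_mul]
    exact (Summable.mul_left _ hu).congr (fun i => (h i).symm)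

lemma totalize (T₁ : (ℕ → ℝ) → ℕ → ℝ) {M : ℝ}
    (hadd : ∀ u v, MemL1 u → MemL1 v → T₁ (u + v) = T₁ u + T₁ v)
    (hneg : ∀ u, MemL1 u → T₁ (-u) = -T₁ u)
    (h1 : ∀ u, MemL1 u → MemL1 (T₁ u) ∧ l1Norm (T₁ u) ≤ M * l1Norm u)
    (h0 : ∀ u, FinSupp u → FinSupp (T₁ u) ∧ (suppCard (T₁ u) : ℝ) ≤ M * suppCard u) :
    ∃ T, IsHom T ∧ L1BddBy T M ∧ L0BddBy T M ∧ ∀ u, MemL1 u → T u = T₁ u := by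
  obtain ⟨Q, hQ⟩ := Submodule.exists_isCompl l1Submodule
  set π := l1Submodule.linearProjOfIsCompl Q hQ with hπ
  set T : (ℕ → ℝ) → ℕ → ℝ := fun u => T₁ ((π u : ℕ → ℝ)) with hT
  have hπl1 : ∀ u, MemL1 ((π u : ℕ → ℝ)) := fun u => (π u).2
  have hfix : ∀ u, MemL1 u → T u = T₁ u := by
    intro u hu
    have : π u = ⟨u, hu⟩ := Submodule.linearProjOfIsCompl_apply_left hQ ⟨u, hu⟩
    rw [hT]
    simp only [this]
  refine ⟨T, ⟨?_, ?_⟩, ?_, ?_, hfix⟩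
  · intro u v
    have : π (u + v) = π u + π v := map_add π u v
    rw [hT]
    simp only [this, Submodule.coe_add]
    exact hadd _ _ (hπl1 u) (hπl1 v)
  · intro u
    have : π (-u) = -(π u) := map_neg π u
    rw [hT]
    simp only [this, Submodule.coe_neg]
    exact hneg _ (hπl1 u)
  · intro u hu
    rw [hfix u hu]
    exact h1 u hu
  · intro u hu
    rw [hfix u (finSupp_memL1 hu)]
    exact h0 u hu

end EInterp
end
end AuxF6
section AuxF7
noncomputable section
namespace EInterp

/-- Calderón-type construction: E-domination yields an orbit map with constant 3. -/
lemma exists_orbit_map {b x : ℕ → ℝ} (hb : MemL1 b) (hx : MemL1 x)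
    (hE : ∀ t > (0:ℝ), Efun t x ≤ Efun t b) :
    ∃ T, IsHom T ∧ L1BddBy T 3 ∧ L0BddBy T 3 ∧ T b = x := by
  set y := sorted x with hy
  set c := sorted b with hc
  have hy0 : ∀ i, 0 ≤ y i := sorted_nonneg x
  have hys : Summable y := summable_sorted hx
  have hc0 : ∀ i, 0 ≤ c i := sorted_nonneg b
  have hcs : Summable c := summable_sorted hb
  have hcA : Antitone c := sorted_antitone hb
  have hdom : ∀ n, tau y n ≤ tau c n := tau_dom_of_Efun_le hx hb hE
  set t := tmat y c with ht
  have hA : ∀ k j, |t k j| ≤ 1 := by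
    intro k j
    rw [ht, abs_of_nonneg (tmat_nonneg hy0 hc0 k j)]
    exact tmat_le_one hy0 hc0 hcs k j
  have hB : ∀ j, Summable (fun k => |t k j|) ∧ ∑' k, |t k j| ≤ 2 := by
    intro j
    have habs : ∀ k, |t k j| = t k j := fun k => abs_of_nonneg (tmat_nonneg hy0 hc0 k j)
    have h := tmat_col hy0 hys hc0 hcs j
    constructor
    · exact h.1.congr (fun k => (habs k).symm)
    · rw [tsum_congr habs]
      exact h.2
  have hC : ∀ j, {k | t k j ≠ 0}.Finite ∧ {k | t k j ≠ 0}.ncard ≤ 3 :=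
    fun j => tmat_colcount hy0 hys hc0 hcs hcA hdom j
  set T₁ : (ℕ → ℝ) → ℕ → ℝ := fun u => Vmap x (matOp t (Umap b u)) with hT₁
  -- bounds for the composition
  have hl1 : ∀ u, MemL1 u → MemL1 (T₁ u) ∧ l1Norm (T₁ u) ≤ 3 * l1Norm u := by
    intro u hu
    have hU := Umap_l1 hb hu
    have hM := matOp_l1 hA hB hU.1
    have hV := Vmap_l1 hx hM.1
    refine ⟨hV.1, ?_⟩
    have h2 : (2:ℝ) * l1Norm (Umap b u) ≤ 2 * l1Norm u :=
      mul_le_mul_of_nonneg_left hU.2 (by norm_num)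
    have h3 : l1Norm u ≥ 0 := l1Norm_nonneg u
    calc l1Norm (T₁ u) ≤ l1Norm (matOp t (Umap b u)) := hV.2
      _ ≤ 2 * l1Norm (Umap b u) := hM.2
      _ ≤ 2 * l1Norm u := h2
      _ ≤ 3 * l1Norm u := by linarith
  have hl0 : ∀ u, FinSupp u → FinSupp (T₁ u) ∧ (suppCard (T₁ u) : ℝ) ≤ 3 * suppCard u := by
    intro u hu
    have hU := Umap_l0 hb hu
    have hM := matOp_l0 (Mc := 3) hC hU.1
    have hV := Vmap_l0 hx hM.1
    refine ⟨hV.1, ?_⟩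
    calc (suppCard (T₁ u) : ℝ) ≤ (suppCard (matOp t (Umap b u)) : ℝ) := by
          exact_mod_cast hV.2
      _ ≤ (3:ℕ) * suppCard (Umap b u) := hM.2
      _ ≤ 3 * suppCard u := by
          push_cast
          have : (suppCard (Umap b u) : ℝ) ≤ (suppCard u : ℝ) := by exact_mod_cast hU.2
          linarith
  have haddT : ∀ u v, MemL1 u → MemL1 v → T₁ (u + v) = T₁ u + T₁ v := by
    intro u v hu hv
    rw [hT₁]
    simp only
    rw [Umap_add, matOp_add hA (Umap_l1 hb hu).1 (Umap_l1 hb hv).1, Vmap_add]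
  have hnegT : ∀ u, MemL1 u → T₁ (-u) = -T₁ u := by
    intro u _
    rw [hT₁]
    simp only
    rw [Umap_neg, matOp_neg, Vmap_neg]
  have hT₁b : T₁ b = x := by
    rw [hT₁]
    simp only
    rw [Umap_self]
    have hrow : matOp t c = y := by
      funext k
      exact tmat_row_c hy0 hys hc0 hcs hdom k
    rw [← hc, hrow, hy, Vmap_sorted hx]
  obtain ⟨T, hfix1, hfix2, hfix3, hfix4⟩ := totalize T₁ haddT hnegT hl1 hl0
  exact ⟨T, hfix1, hfix2, hfix3, by rw [hfix4 b hb]; exact hT₁b⟩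

end EInterp
end
end AuxF7
section AuxF8
noncomputable section
namespace EInterp
open Filter Topology

/-! ### gluing countably many operators -/

def pe : ℕ × ℕ ≃ ℕ := Nat.pairEquiv

def blk (n i : ℕ) : ℕ := pe (n, i)

lemma blk_injective (n : ℕ) : Function.Injective (blk n) := by
  intro i i' h
  have := pe.injective h
  exact (Prod.mk.injEq _ _ _ _).mp this |>.2

lemma blk_inj2 {n i n' i' : ℕ} (h : blk n i = blk n' i') : n = n' ∧ i = i' := by
  have := pe.injective h
  exact (Prod.mk.injEq _ _ _ _).mp this

lemma pe_symm_blk (n i : ℕ) : pe.symm (blk n i) = (n, i) := pe.symm_apply_apply _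

def res (n : ℕ) (u : ℕ → ℝ) : ℕ → ℝ := fun i => u (blk n i)

lemma res_add (n : ℕ) (u v : ℕ → ℝ) : res n (u + v) = res n u + res n v := rfl

lemma res_neg (n : ℕ) (u : ℕ → ℝ) : res n (-u) = -(res n u) := rfl

lemma memL1_res {u : ℕ → ℝ} (hu : MemL1 u) (n : ℕ) : MemL1 (res n u) :=
  (hu.comp_injective (blk_injective n)).congr (fun i => rfl)

lemma finSupp_res {u : ℕ → ℝ} (hu : FinSupp u) (n : ℕ) : FinSupp (res n u) := by
  have hsub : {i | res n u i ≠ 0} ⊆ (blk n) ⁻¹' {m | u m ≠ 0} := fun i hi => hi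
  exact (Set.Finite.preimage ((blk_injective n).injOn) hu).subset hsub

def glueOp (T : ℕ → (ℕ → ℝ) → ℕ → ℝ) (u : ℕ → ℝ) : ℕ → ℝ :=
  fun m => T (pe.symm m).1 (res (pe.symm m).1 u) (pe.symm m).2

lemma glueOp_hom {T : ℕ → (ℕ → ℝ) → ℕ → ℝ} (hT : ∀ n, IsHom (T n)) :
    IsHom (glueOp T) := by
  constructor
  · intro u v
    funext m
    simp only [glueOp, Pi.add_apply, res_add]
    rw [(hT _).1]
    rfl
  · intro u
    funext m
    simp only [glueOp, Pi.neg_apply, res_neg]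
    rw [(hT _).2]
    rfl

lemma sum_l1Norm_res {u : ℕ → ℝ} (hu : MemL1 u) (F : Finset ℕ) :
    ∑ n ∈ F, l1Norm (res n u) ≤ l1Norm u := by
  have hF : Summable (fun p : ℕ × ℕ => |u (pe p)|) := by
    have := (Equiv.summable_iff pe (f := fun m => |u m|)).mpr hu
    exact this
  have hmarg := (summable_prod_of_nonneg (fun p => abs_nonneg _)).mp hF
  have heq : ∀ n, l1Norm (res n u) = ∑' i, |u (pe (n, i))| := fun n => rfl
  have h1 : ∑ n ∈ F, l1Norm (res n u) ≤ ∑' n, ∑' i, |u (pe (n, i))| := by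
    rw [Finset.sum_congr rfl (fun n _ => heq n)]
    exact Summable.sum_le_tsum F (fun n _ => tsum_nonneg (fun i => abs_nonneg _)) hmarg.2
  have h2 : ∑' n, ∑' i, |u (pe (n, i))| = ∑' p : ℕ × ℕ, |u (pe p)| := (Summable.tsum_prod' hF hmarg.1).symm
  have h3 : ∑' p : ℕ × ℕ, |u (pe p)| = l1Norm u := pe.tsum_eq (fun m => |u m|)
  linarith

lemma glueOp_l1 {T : ℕ → (ℕ → ℝ) → ℕ → ℝ} (hT : ∀ n, L1BddBy (T n) 3)
    {u : ℕ → ℝ} (hu : MemL1 u) :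
    MemL1 (glueOp T u) ∧ l1Norm (glueOp T u) ≤ 3 * l1Norm u := by
  classical
  have hbound : ∀ K, ∑ m ∈ Finset.range K, |glueOp T u m| ≤ 3 * l1Norm u := by
    intro K
    set P : Finset (ℕ × ℕ) := (Finset.range K).image pe.symm with hP
    set G : ℕ × ℕ → ℝ := fun p => |T p.1 (res p.1 u) p.2| with hG
    have h1 : ∑ m ∈ Finset.range K, |glueOp T u m| = ∑ p ∈ P, G p := by
      rw [hP, Finset.sum_image (fun a _ b _ h => pe.symm.injective h)]
      rfl
    set Nset : Finset ℕ := P.image Prod.fst with hN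
    set Iset : Finset ℕ := P.image Prod.snd with hI
    have hsub : P ⊆ Nset ×ˢ Iset := by
      intro p hp
      rw [Finset.mem_product]
      exact ⟨Finset.mem_image_of_mem _ hp, Finset.mem_image_of_mem _ hp⟩
    have h2 : ∑ p ∈ P, G p ≤ ∑ p ∈ Nset ×ˢ Iset, G p :=
      Finset.sum_le_sum_of_subset_of_nonneg hsub (fun p _ _ => abs_nonneg _)
    have h3 : ∑ p ∈ Nset ×ˢ Iset, G p = ∑ n ∈ Nset, ∑ i ∈ Iset, |T n (res n u) i| := by
      rw [Finset.sum_product]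
    have h4 : ∀ n ∈ Nset, ∑ i ∈ Iset, |T n (res n u) i| ≤ 3 * l1Norm (res n u) := by
      intro n _
      have hb := hT n (res n u) (memL1_res hu n)
      exact le_trans (Summable.sum_le_tsum Iset (fun i _ => abs_nonneg _) hb.1) hb.2
    calc ∑ m ∈ Finset.range K, |glueOp T u m| = ∑ p ∈ P, G p := h1
      _ ≤ ∑ p ∈ Nset ×ˢ Iset, G p := h2
      _ = ∑ n ∈ Nset, ∑ i ∈ Iset, |T n (res n u) i| := h3
      _ ≤ ∑ n ∈ Nset, 3 * l1Norm (res n u) := Finset.sum_le_sum h4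
      _ = 3 * ∑ n ∈ Nset, l1Norm (res n u) := by rw [Finset.mul_sum]
      _ ≤ 3 * l1Norm u := by
          have := sum_l1Norm_res hu Nset
          linarith
  have hsum : MemL1 (glueOp T u) :=
    summable_of_sum_range_le (fun m => abs_nonneg _) hbound
  exact ⟨hsum, Summable.tsum_le_of_sum_range_le hsum hbound⟩

lemma sum_suppCard_res {u : ℕ → ℝ} (hu : FinSupp u) (F : Finset ℕ) :
    ∑ n ∈ F, suppCard (res n u) ≤ suppCard u := by
  classical
  set An : ℕ → Finset ℕ := fun n => (finSupp_res hu n).toFinset with hAn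
  have hcard : ∀ n, suppCard (res n u) = (An n).card := by
    intro n
    simp [suppCard, hAn, Set.ncard_eq_toFinset_card _ (finSupp_res hu n)]
  have hdisj : ∀ n₁ ∈ F, ∀ n₂ ∈ F, n₁ ≠ n₂ →
      Disjoint ((An n₁).image (blk n₁)) ((An n₂).image (blk n₂)) := by
    intro n₁ _ n₂ _ hne
    rw [Finset.disjoint_left]
    intro m hm1 hm2
    rw [Finset.mem_image] at hm1 hm2
    obtain ⟨i₁, _, rfl⟩ := hm1
    obtain ⟨i₂, _, heq⟩ := hm2
    exact hne (blk_inj2 heq.symm).1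
  have hsubset : F.biUnion (fun n => (An n).image (blk n)) ⊆ hu.toFinset := by
    intro m hm
    rw [Finset.mem_biUnion] at hm
    obtain ⟨n, _, hm⟩ := hm
    rw [Finset.mem_image] at hm
    obtain ⟨i, hi, rfl⟩ := hm
    rw [hAn] at hi
    replace hi := (Set.Finite.mem_toFinset (finSupp_res hu n)).mp hi
    exact (Set.Finite.mem_toFinset hu).mpr hi
  calc ∑ n ∈ F, suppCard (res n u) = ∑ n ∈ F, ((An n).image (blk n)).card := by
        refine Finset.sum_congr rfl (fun n _ => ?_)
        rw [hcard, Finset.card_image_of_injective _ (blk_injective n)]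
    _ = (F.biUnion (fun n => (An n).image (blk n))).card := (Finset.card_biUnion hdisj).symm
    _ ≤ hu.toFinset.card := Finset.card_le_card hsubset
    _ = suppCard u := by simp [suppCard, Set.ncard_eq_toFinset_card _ hu]

lemma glueOp_l0 {T : ℕ → (ℕ → ℝ) → ℕ → ℝ} (hTh : ∀ n, IsHom (T n))
    (hT : ∀ n, L0BddBy (T n) 3) {u : ℕ → ℝ} (hu : FinSupp u) :
    FinSupp (glueOp T u) ∧ (suppCard (glueOp T u) : ℝ) ≤ 3 * suppCard u := by
  classical
  set Nset : Finset ℕ := hu.toFinset.image (fun m => (pe.symm m).1) with hNset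
  set B : ℕ → Set ℕ := fun n => (blk n) '' {i | T n (res n u) i ≠ 0} with hB
  have hTfin : ∀ n, FinSupp (T n (res n u)) ∧
      (suppCard (T n (res n u)) : ℝ) ≤ 3 * suppCard (res n u) :=
    fun n => hT n (res n u) (finSupp_res hu n)
  have hBfin : ∀ n, (B n).Finite := fun n => ((hTfin n).1).image _
  have hsub : {m | glueOp T u m ≠ 0} ⊆ ⋃ n ∈ Nset, B n := by
    intro m hm
    simp only [Set.mem_setOf_eq, glueOp] at hm
    set n := (pe.symm m).1 with hn
    have hresne : res n u ≠ 0 := by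
      intro h0
      rw [h0, isHom_map_zero (hTh n)] at hm
      exact hm rfl
    have hex : ∃ i', u (blk n i') ≠ 0 := by
      by_contra hno
      push_neg at hno
      exact hresne (funext (fun i => hno i))
    obtain ⟨i', hi'⟩ := hex
    have hnN : n ∈ Nset := by
      rw [hNset, Finset.mem_image]
      refine ⟨blk n i', ?_, ?_⟩
      · exact (Set.Finite.mem_toFinset hu).mpr hi'
      · rw [pe_symm_blk]
    have hmB : m ∈ B n := by
      rw [hB]
      refine ⟨(pe.symm m).2, hm, ?_⟩
      show blk n (pe.symm m).2 = m
      simp only [blk]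
      rw [hn, Prod.mk.eta]
      exact pe.apply_symm_apply m
    exact Set.mem_biUnion hnN hmB
  have hfinU : (⋃ n ∈ Nset, B n).Finite :=
    Set.Finite.biUnion Nset.finite_toSet (fun n _ => hBfin n)
  refine ⟨hfinU.subset hsub, ?_⟩
  have h1 : suppCard (glueOp T u) ≤ ∑ n ∈ Nset, (B n).ncard := by
    calc suppCard (glueOp T u) ≤ (⋃ n ∈ Nset, B n).ncard := Set.ncard_le_ncard hsub hfinU
      _ ≤ ∑ n ∈ Nset, (B n).ncard := ncard_biUnion_le Nset B
  have h2 : ∀ n, (B n).ncard = suppCard (T n (res n u)) := by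
    intro n
    rw [hB]
    exact Set.ncard_image_of_injective _ (blk_injective n)
  calc (suppCard (glueOp T u) : ℝ) ≤ ((∑ n ∈ Nset, (B n).ncard : ℕ) : ℝ) := by
        exact_mod_cast h1
    _ = ∑ n ∈ Nset, ((B n).ncard : ℝ) := by push_cast; ring
    _ = ∑ n ∈ Nset, (suppCard (T n (res n u)) : ℝ) := by
        refine Finset.sum_congr rfl (fun n _ => ?_)
        rw [h2]
    _ ≤ ∑ n ∈ Nset, 3 * (suppCard (res n u) : ℝ) :=
        Finset.sum_le_sum (fun n _ => (hTfin n).2)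
    _ = 3 * ((∑ n ∈ Nset, suppCard (res n u) : ℕ) : ℝ) := by
        rw [← Finset.mul_sum]
        push_cast
        ring
    _ ≤ 3 * suppCard u := by
        have := sum_suppCard_res hu Nset
        have h3 : ((∑ n ∈ Nset, suppCard (res n u) : ℕ) : ℝ) ≤ (suppCard u : ℝ) := by
          exact_mod_cast this
        linarith

lemma glueOp_push {T : ℕ → (ℕ → ℝ) → ℕ → ℝ} (hTh : ∀ k, IsHom (T k))
    (n : ℕ) (w : ℕ → ℝ) :
    glueOp T (push (blk n) w) = push (blk n) (T n w) := by
  classical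
  have hres : ∀ k, res k (push (blk n) w) = if k = n then w else 0 := by
    intro k
    funext i
    rw [res]
    split_ifs with hk
    · rw [hk]
      exact push_apply (blk_injective n) w i
    · refine push_eq_zero _ _ ?_
      rintro ⟨i', hi'⟩
      exact hk ((blk_inj2 hi').1).symm
  funext m
  show T (pe.symm m).1 (res (pe.symm m).1 (push (blk n) w)) (pe.symm m).2
      = push (blk n) (T n w) m
  rw [hres]
  by_cases hk : (pe.symm m).1 = n
  · rw [if_pos hk]
    have hm : blk n (pe.symm m).2 = m := by
      simp only [blk]
      rw [← hk, Prod.mk.eta]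
      exact pe.apply_symm_apply m
    calc T (pe.symm m).1 w (pe.symm m).2 = T n w (pe.symm m).2 := by rw [hk]
      _ = push (blk n) (T n w) (blk n (pe.symm m).2) := (push_apply (blk_injective n) _ _).symm
      _ = push (blk n) (T n w) m := by rw [hm]
  · rw [if_neg hk, isHom_map_zero (hTh (pe.symm m).1)]
    have hm0 : push (blk n) (T n w) m = 0 := by
      refine push_eq_zero _ _ ?_
      rintro ⟨i', rfl⟩
      rw [pe_symm_blk] at hk
      exact hk rfl
    rw [hm0]
    rfl

end EInterp
end
end AuxF8
section AuxF9
noncomputable section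
namespace EInterp

variable {X : Set (ℕ → ℝ)} {N : (ℕ → ℝ) → ℝ}

/-- The forward direction of the main theorem. -/
lemma forward_direction (hri : IsRIGroup X N) (hl0 : ∀ x, FinSupp x → x ∈ X)
    (hl1 : ∀ x ∈ X, MemL1 x) (hint : InterpGroup X N) :
    ∃ C : ℝ, 0 < C ∧ ∀ b ∈ X, ∀ x : ℕ → ℝ, MemL1 x →
      (∀ t > (0 : ℝ), Efun t x ≤ Efun t b) →
      x ∈ X ∧ N x ≤ C * N b := by
  by_contra hno
  push_neg at hno
  have H : ∀ n : ℕ, ∃ b x, b ∈ X ∧ MemL1 x ∧ (∀ t > (0:ℝ), Efun t x ≤ Efun t b) ∧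
      ¬(x ∈ X ∧ N x ≤ ((n : ℝ) + 1) * N b) := by
    intro n
    obtain ⟨b, hb, x, hx, hE, hnot⟩ := hno ((n : ℝ) + 1) (by positivity)
    exact ⟨b, x, hb, hx, hE, fun hcon => absurd hcon.2 (not_le.mpr (hnot hcon.1))⟩
  choose bb xx hbX hxl1 hE hnot using H
  have HT : ∀ n : ℕ, ∃ T, IsHom T ∧ L1BddBy T 3 ∧ L0BddBy T 3 ∧ T (bb n) = xx n :=
    fun n => exists_orbit_map (hl1 (bb n) (hbX n)) (hxl1 n) (hE n)
  choose TT hTh hT1 hT0 hTb using HT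
  -- the glued operator
  set Tg := glueOp TT with hTg
  have hTgh : IsHom Tg := glueOp_hom hTh
  have hTg1 : L1BddBy Tg 3 := fun u hu => glueOp_l1 hT1 hu
  have hTg0 : L0BddBy Tg 3 := fun u hu => glueOp_l0 hTh hT0 hu
  obtain ⟨hmaps, M', hM'0, hM'⟩ := hint Tg hTgh ⟨3, hTg1, hTg0⟩
  -- derive the contradiction at n = ⌈M'⌉
  set n := ⌈M'⌉₊ with hn
  set z := push (blk n) (bb n) with hz
  have hzX : z ∈ X ∧ N z = N (bb n) := X_push hri (blk_injective n) (hbX n)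
  have hTgz : Tg z = push (blk n) (xx n) := by
    rw [hTg, hz, glueOp_push hTh n (bb n), hTb n]
  have hTgzX : Tg z ∈ X := hmaps z hzX.1
  have hxxX : xx n ∈ X ∧ N (xx n) ≤ N (Tg z) := by
    have h := hri.2.2.2.2 (xx n) (Tg z) hTgzX (fun k _ => by
      rw [hTgz]
      exact (rearr_push (blk_injective n) (xx n) k).symm.le)
    exact h
  have hNb : 0 ≤ N (bb n) := hri.1 (bb n) (hbX n)
  have hfinal : N (xx n) ≤ ((n : ℝ) + 1) * N (bb n) := by
    calc N (xx n) ≤ N (Tg z) := hxxX.2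
      _ ≤ M' * N z := hM' z hzX.1
      _ = M' * N (bb n) := by rw [hzX.2]
      _ ≤ ((n : ℝ) + 1) * N (bb n) := by
          refine mul_le_mul_of_nonneg_right ?_ hNb
          calc M' ≤ (⌈M'⌉₊ : ℝ) := Nat.le_ceil M'
            _ ≤ (n : ℝ) + 1 := by rw [hn]; linarith
  exact hnot n ⟨hxxX.1, hfinal⟩

end EInterp
end
end AuxF9

/-- E-description of interpolation groups for `(ℓ⁰, ℓ¹)`: a rearrangement
invariant sequence group `X` with `ℓ⁰ ⊆ X ⊆ ℓ¹` is an interpolation group with respect to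
`(ℓ⁰, ℓ¹)` iff there is `C > 0` (depending only on `X`) such that whenever `b ∈ X`,
`x ∈ ℓ¹` and `E(t,x) ≤ E(t,b)` for all `t > 0`, it follows that `x ∈ X` and
`‖x‖_X ≤ C‖b‖_X`. -/
theorem interpolation_iff_E_monotone (X : Set (ℕ → ℝ)) (N : (ℕ → ℝ) → ℝ)
    (hri : IsRIGroup X N) (hl0 : ∀ x, FinSupp x → x ∈ X) (hl1 : ∀ x ∈ X, MemL1 x) :
    InterpGroup X N ↔
      ∃ C : ℝ, 0 < C ∧ ∀ b ∈ X, ∀ x : ℕ → ℝ, MemL1 x →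
        (∀ t > (0 : ℝ), Efun t x ≤ Efun t b) →
        x ∈ X ∧ N x ≤ C * N b := by
  constructor
  · intro hint
    exact EInterp.forward_direction hri hl0 hl1 hint
  · rintro ⟨C, hC, hmain⟩
    exact EInterp.backward_direction hri hl0 hl1 hC hmain
end

section
/- Let C > 1 and let b = (b_i)_{i≥1} be a nonincreasing summable sequence of nonnegative reals. Set m := 3(⌊C⌋+1). Then for every k ≥ 1, C · ∑_{i=max(⌊k/C⌋,1)}^∞ b_i ≤ ∑_{i=k}^∞ (σ_m b)_i, where σ_m b is the sequence obtained from b by repeating each coordinate m times. -/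
open scoped BigOperators ENNReal

noncomputable def tailE (F : ℕ → ℝ≥0∞) (n : ℕ) : ℝ≥0∞ := ∑' i : {i : ℕ // n ≤ i}, F i.1

lemma tailE_mono (F : ℕ → ℝ≥0∞) {m n : ℕ} (h : m ≤ n) : tailE F n ≤ tailE F m := by
  have hinj : Function.Injective
      (fun i : {i : ℕ // n ≤ i} => (⟨i.1, le_trans h i.2⟩ : {i : ℕ // m ≤ i})) := by
    intro a b hab
    have : a.1 = b.1 := congrArg (fun x : {i : ℕ // m ≤ i} => x.1) hab
    exact Subtype.ext this
  exact ENNReal.tsum_comp_le_tsum_of_injective hinj (fun i => F i.1)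

lemma pair_tsum (F : ℕ → ℝ≥0∞) (n L : ℕ) :
    ∑' p : {j : ℕ // n ≤ j} × Fin L, F p.1.1 = (L : ℝ≥0∞) * tailE F n := by
  rw [ENNReal.tsum_prod' (f := fun p : {j : ℕ // n ≤ j} × Fin L => F p.1.1)]
  calc ∑' (a : {j : ℕ // n ≤ j}), ∑' (_ : Fin L), F a.1
      = ∑' (a : {j : ℕ // n ≤ j}), (L : ℝ≥0∞) * F a.1 := by
        refine tsum_congr fun a => ?_
        rw [tsum_fintype]
        simp [Finset.sum_const, nsmul_eq_mul]
    _ = (L : ℝ≥0∞) * tailE F n := ENNReal.tsum_mul_left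

lemma pair_tsum' (G : ℕ → ℝ≥0∞) (L : ℕ) :
    ∑' p : ℕ × Fin L, G p.1 = (L : ℝ≥0∞) * ∑' a : ℕ, G a := by
  rw [ENNReal.tsum_prod' (f := fun p : ℕ × Fin L => G p.1)]
  calc ∑' (a : ℕ), ∑' (_ : Fin L), G a
      = ∑' (a : ℕ), (L : ℝ≥0∞) * G a := by
        refine tsum_congr fun a => ?_
        rw [tsum_fintype]
        simp [Finset.sum_const, nsmul_eq_mul]
    _ = (L : ℝ≥0∞) * ∑' a : ℕ, G a := ENNReal.tsum_mul_left

lemma nat_div_helper (M j s : ℕ) (hM : 0 < M) (hs : s < M) : (j * M + s) / M = j := by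
  rw [mul_comm, Nat.mul_add_div hM, Nat.div_eq_of_lt hs, add_zero]

lemma block_inj (M n : ℕ) (hM : 0 < M) (hn : 1 ≤ n) :
    Function.Injective (fun p : {j : ℕ // n ≤ j} × Fin M => (p.1.1 - 1) * M + 1 + p.2.1) := by
  rintro ⟨⟨j, hj⟩, ⟨r, hr⟩⟩ ⟨⟨j', hj'⟩, ⟨r', hr'⟩⟩ h
  simp only at h
  have h1 : ((j - 1) * M + r) / M = j - 1 := nat_div_helper M (j-1) r hM hr
  have h2 : ((j' - 1) * M + r') / M = j' - 1 := nat_div_helper M (j'-1) r' hM hr'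
  have h3 : ((j - 1) * M + r) % M = r := by
    rw [add_comm, Nat.add_mul_mod_self_right, Nat.mod_eq_of_lt hr]
  have h4 : ((j' - 1) * M + r') % M = r' := by
    rw [add_comm, Nat.add_mul_mod_self_right, Nat.mod_eq_of_lt hr']
  have he : (j - 1) * M + r = (j' - 1) * M + r' := by omega
  have hjj : j - 1 = j' - 1 := by rw [← h1, ← h2, he]
  have hrr : r = r' := by rw [← h3, ← h4, he]
  have hj0 : j = j' := by omega
  simp [hj0, hrr]

/-- for `C > 1`, a nonincreasing nonnegative summable sequence `b` (indexed
from 1) and `m := 3(⌊C⌋+1)`, one has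
`C·∑_{i=max(⌊k/C⌋,1)}^∞ b i ≤ ∑_{i=k}^∞ (σ_m b) i` for all `k ≥ 1`. -/
theorem dilation_tail_estimate_of_one_lt (C : ℝ) (hC : 1 < C) (b : ℕ → ℝ)
    (hb0 : ∀ i : ℕ, 1 ≤ i → 0 ≤ b i)
    (hbmono : ∀ i i' : ℕ, 1 ≤ i → i ≤ i' → b i' ≤ b i)
    (hbsum : Summable fun i : {i : ℕ // 1 ≤ i} => b i.1) :
    ∀ k : ℕ, 1 ≤ k →
      C * ∑' i : {i : ℕ // max ⌊(k : ℝ) / C⌋₊ 1 ≤ i}, b i.1 ≤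
        ∑' i : {i : ℕ // k ≤ i}, sigmaDil (3 * (⌊C⌋₊ + 1)) b i.1 := by
  intro k hk
  have hC0 : (0:ℝ) < C := lt_trans one_pos hC
  set M : ℕ := 3 * (⌊C⌋₊ + 1) with hM
  set L : ℕ := ⌊C⌋₊ + 1 with hL
  have hM0 : 0 < M := by omega
  have hM3L : M = 3 * L := by omega
  have hCL : C < (L : ℝ) := by
    have h := Nat.lt_floor_add_one C
    push_cast
    push_cast at h
    rw [hL]; push_cast; linarith
  set k0 : ℕ := max ⌊(k : ℝ) / C⌋₊ 1 with hk0
  have hk01 : 1 ≤ k0 := le_max_right _ _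
  -- the real sequence c (zeroed at 0) and its ENNReal versions
  set c : ℕ → ℝ := fun i => if i = 0 then 0 else b i with hc
  have hc0 : ∀ i, 0 ≤ c i := by
    intro i
    by_cases h : i = 0
    · simp [hc, h]
    · simp only [hc, if_neg h]
      exact hb0 i (by omega)
  have hsc : Summable c := by
    have h1 : Summable (Set.indicator {i : ℕ | 1 ≤ i} b) :=
      summable_subtype_iff_indicator.mp hbsum
    refine h1.congr fun i => ?_
    by_cases h : i = 0
    · simp [Set.indicator, hc, h]
    · simp [Set.indicator, hc, h, Nat.one_le_iff_ne_zero]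
  set F : ℕ → ℝ≥0∞ := fun i => ENNReal.ofReal (c i) with hF
  set FD : ℕ → ℝ≥0∞ :=
    fun i => ENNReal.ofReal (if i = 0 then 0 else b ((i - 1) / M + 1)) with hFD
  have FDeq : ∀ j s : ℕ, 1 ≤ j → s < M → FD ((j-1)*M + 1 + s) = F j := by
    intro j s hj hs
    have hi : (j-1)*M + 1 + s ≠ 0 := by omega
    have hdiv : ((j-1)*M + 1 + s - 1)/M + 1 = j := by
      have h1 : (j-1)*M + 1 + s - 1 = (j-1)*M + s := by omega
      rw [h1, nat_div_helper M (j-1) s hM0 hs]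
      omega
    simp only [hFD, hF, hc]
    rw [if_neg hi, hdiv, if_neg (by omega : j ≠ 0)]
  -- the key ENNReal inequality
  have key : ENNReal.ofReal C * tailE F k0 ≤ ∑' i : {i : ℕ // k ≤ i}, FD i.1 := by
    have hCM : ENNReal.ofReal C ≤ (L : ℝ≥0∞) := by
      calc ENNReal.ofReal C ≤ ENNReal.ofReal (L : ℝ) := ENNReal.ofReal_le_ofReal hCL.le
        _ = (L : ℝ≥0∞) := ENNReal.ofReal_natCast L
    rcases le_or_gt ⌊(k : ℝ) / C⌋₊ 1 with hq | hq
    · -- small case : k0 = 1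
      have hk01' : k0 = 1 := by omega
      have hk2L : k < 2 * L := by
        have h1 : (k:ℝ)/C < (⌊(k : ℝ)/C⌋₊ : ℝ) + 1 := Nat.lt_floor_add_one _
        have h2 : ((⌊(k : ℝ)/C⌋₊ : ℕ) : ℝ) ≤ 1 := by exact_mod_cast hq
        have h25 : (k:ℝ)/C < 2 := by linarith
        have h3 : (k:ℝ) < 2 * C := by
          have h4 := (div_lt_iff₀ hC0).mp h25
          linarith
        have hLr : (L:ℝ) = (⌊C⌋₊:ℝ) + 1 := by rw [hL]; push_cast; ring
        have h5 : (k:ℝ) < ((2 * L : ℕ) : ℝ) := by push_cast; linarith [hCL, hLr]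
        exact_mod_cast h5
      set φ : {j : ℕ // 1 ≤ j} × Fin L → {i : ℕ // k ≤ i} := fun p =>
        ⟨(p.1.1 - 1) * M + 1 + (2 * L + p.2.1), by
          have h2 := p.2.isLt
          omega⟩ with hφ
      have hφinj : Function.Injective φ := by
        intro p q hpq
        have h1 : (p.1.1 - 1) * M + 1 + (2*L + p.2.1) = (q.1.1 - 1)*M + 1 + (2*L + q.2.1) :=
          congrArg (fun x : {i : ℕ // k ≤ i} => x.1) hpq
        have h2 : ((p.1, (⟨2*L + p.2.1, by omega⟩ : Fin M)) : {j : ℕ // 1 ≤ j} × Fin M)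
            = (q.1, ⟨2*L + q.2.1, by omega⟩) := block_inj M 1 hM0 le_rfl h1
        have h3 : p.1 = q.1 := congrArg (fun x : {j : ℕ // 1 ≤ j} × Fin M => x.1) h2
        have h4 : 2*L + p.2.1 = 2*L + q.2.1 :=
          congrArg (fun x : {j : ℕ // 1 ≤ j} × Fin M => x.2.1) h2
        have h5 : p.2 = q.2 := Fin.ext (by omega)
        exact Prod.ext h3 h5
      calc ENNReal.ofReal C * tailE F k0
          = ENNReal.ofReal C * tailE F 1 := by rw [hk01']
        _ ≤ (L : ℝ≥0∞) * tailE F 1 := mul_le_mul_left hCM _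
        _ = ∑' p : {j : ℕ // 1 ≤ j} × Fin L, F p.1.1 := (pair_tsum F 1 L).symm
        _ = ∑' p : {j : ℕ // 1 ≤ j} × Fin L, FD (φ p).1 :=
            tsum_congr fun p => (FDeq p.1.1 (2*L + p.2.1) p.1.2 (by have := p.2.isLt; omega)).symm
        _ ≤ ∑' i : {i : ℕ // k ≤ i}, FD i.1 :=
            ENNReal.tsum_comp_le_tsum_of_injective hφinj (fun i => FD i.1)
    · -- main case : k0 = ⌊k/C⌋ ≥ 2
      set q : ℕ := ⌊(k : ℝ) / C⌋₊ with hqdef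
      have hk0q : k0 = q := by omega
      have hkq : (k:ℝ) < ((q:ℝ)+1) * C := by
        have h1 : (k:ℝ)/C < (q:ℝ) + 1 := Nat.lt_floor_add_one _
        have := (div_lt_iff₀ hC0).mp h1
        linarith
      have hM3C : 3 * C < (M:ℝ) := by
        have : (M:ℝ) = 3 * (L:ℝ) := by exact_mod_cast congrArg (Nat.cast (R := ℝ)) hM3L
        rw [this]; linarith
      have hq2 : (2:ℝ) ≤ (q:ℝ) := by exact_mod_cast hq
      have hkey : k - 1 < (q - 1) * M := by
        have h2 : ((q:ℝ)+1)*C ≤ ((q:ℝ)-1) * (3*C) := by nlinarith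
        have h4 : ((q:ℝ)-1) * (3*C) < ((q:ℝ)-1) * M := by
          apply mul_lt_mul_of_pos_left hM3C
          linarith
        have hq1 : (((q-1:ℕ)):ℝ) = (q:ℝ) - 1 := by
          rw [Nat.cast_sub (by omega : 1 ≤ q)]; norm_num
        have h3 : (k:ℝ) < (((q-1)*M : ℕ) : ℝ) := by
          push_cast
          rw [Nat.cast_sub (by omega : 1 ≤ q)]
          push_cast
          linarith
        have h5 : k < (q-1)*M := by exact_mod_cast h3
        omega
      set n : ℕ := (k-1)/M + 2 with hn
      have hn1 : 1 ≤ n := le_trans one_le_two (Nat.le_add_left 2 _)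
      have hnq : n ≤ q := by
        have h6 : (k-1)/M < q - 1 := (Nat.div_lt_iff_lt_mul hM0).mpr hkey
        omega
      have hkblock : k ≤ (n - 1)*M + 1 := by
        have hdm := Nat.div_add_mod (k-1) M
        have hmod : (k-1) % M < M := Nat.mod_lt _ hM0
        have hcomm : M * ((k-1)/M) = ((k-1)/M)*M := mul_comm _ _
        have hexp : (n - 1)*M = ((k-1)/M)*M + M := by
          have : n - 1 = (k-1)/M + 1 := by omega
          rw [this, add_mul, one_mul]
        omega
      set φ : {j : ℕ // n ≤ j} × Fin M → {i : ℕ // k ≤ i} := fun p =>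
        ⟨(p.1.1 - 1) * M + 1 + p.2.1, by
          have h1 := p.1.2
          have h7 : (n-1)*M ≤ (p.1.1-1)*M := Nat.mul_le_mul_right M (by omega)
          omega⟩ with hφ
      have hφinj : Function.Injective φ := by
        intro p r hpq
        exact block_inj M n hM0 hn1 (congrArg (fun x : {i : ℕ // k ≤ i} => x.1) hpq)
      calc ENNReal.ofReal C * tailE F k0
          ≤ (M : ℝ≥0∞) * tailE F n := by
            apply mul_le_mul'
            · calc ENNReal.ofReal C ≤ (L : ℝ≥0∞) := hCM
                _ ≤ (M : ℝ≥0∞) := by exact_mod_cast Nat.cast_le.mpr (by omega : L ≤ M)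
            · exact hk0q ▸ tailE_mono F hnq
        _ = ∑' p : {j : ℕ // n ≤ j} × Fin M, F p.1.1 := (pair_tsum F n M).symm
        _ = ∑' p : {j : ℕ // n ≤ j} × Fin M, FD (φ p).1 :=
            tsum_congr fun p => (FDeq p.1.1 p.2.1 (le_trans hn1 p.1.2) p.2.isLt).symm
        _ ≤ ∑' i : {i : ℕ // k ≤ i}, FD i.1 :=
            ENNReal.tsum_comp_le_tsum_of_injective hφinj (fun i => FD i.1)
  -- finiteness of the right-hand side
  have hFne : (∑' i : ℕ, F i) ≠ ⊤ := by
    have : (∑' i : ℕ, F i) = ENNReal.ofReal (∑' i, c i) :=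
      (ENNReal.ofReal_tsum_of_nonneg hc0 hsc).symm
    rw [this]
    exact ENNReal.ofReal_ne_top
  have hBD : (∑' i : {i : ℕ // k ≤ i}, FD i.1) ≠ ⊤ := by
    have h1 : (∑' i : {i : ℕ // k ≤ i}, FD i.1) ≤ ∑' i : ℕ, FD i :=
      ENNReal.tsum_comp_le_tsum_of_injective Subtype.coe_injective FD
    have hFD0 : FD 0 = 0 := by simp [hFD]
    have h3 : ∀ i : ℕ, FD (i + 1) = F (i / M + 1) := by
      intro i
      have hidx : (i/M)*M + 1 + i % M = i + 1 := by
        have hdm := Nat.div_add_mod i M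
        have hcomm : M * (i/M) = (i/M)*M := mul_comm _ _
        omega
      have h4 := FDeq (i/M + 1) (i % M) (Nat.succ_le_succ (Nat.zero_le _)) (Nat.mod_lt _ hM0)
      simpa [hidx] using h4
    have h2 : (∑' i : ℕ, FD i) ≤ (M : ℝ≥0∞) * ∑' i : ℕ, F i := by
      rw [tsum_eq_zero_add' ENNReal.summable, hFD0, zero_add]
      have hψinj : Function.Injective
          (fun i : ℕ => ((i / M, ⟨i % M, Nat.mod_lt _ hM0⟩) : ℕ × Fin M)) := by
        intro a b hab
        have ha1 : a / M = b / M := congrArg (fun x : ℕ × Fin M => x.1) hab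
        have ha2 : a % M = b % M := congrArg (fun x : ℕ × Fin M => x.2.1) hab
        have hda := Nat.div_add_mod a M
        have hdb := Nat.div_add_mod b M
        rw [ha1, ha2] at hda
        omega
      calc ∑' i : ℕ, FD (i + 1) = ∑' i : ℕ, F (i / M + 1) := tsum_congr h3
        _ ≤ ∑' p : ℕ × Fin M, F (p.1 + 1) :=
            ENNReal.tsum_comp_le_tsum_of_injective hψinj (fun p => F (p.1 + 1))
        _ = (M : ℝ≥0∞) * ∑' a : ℕ, F (a + 1) := pair_tsum' (fun a => F (a + 1)) M
        _ ≤ (M : ℝ≥0∞) * ∑' i : ℕ, F i := by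
            apply mul_le_mul_right
            exact ENNReal.tsum_comp_le_tsum_of_injective Nat.succ_injective F
    have h5 : (M : ℝ≥0∞) * ∑' i : ℕ, F i < ⊤ :=
      ENNReal.mul_lt_top (by simp) hFne.lt_top
    exact (lt_of_le_of_lt (h1.trans h2) h5).ne
  -- conversion back to ℝ
  have hA_summ : Summable (fun i : {i : ℕ // k0 ≤ i} => b i.1) := by
    have h1 := hsc.subtype {i : ℕ | k0 ≤ i}
    refine h1.congr fun i => ?_
    have : i.1 ≠ 0 := by have : k0 ≤ i.1 := i.2; omega
    simp [hc, this, Function.comp]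
  have hA : ENNReal.ofReal (∑' i : {i : ℕ // k0 ≤ i}, b i.1) = tailE F k0 := by
    rw [ENNReal.ofReal_tsum_of_nonneg (fun i : {i : ℕ // k0 ≤ i} => hb0 i.1 (le_trans hk01 i.2)) hA_summ]
    refine tsum_congr fun i => ?_
    have hi : i.1 ≠ 0 := by have := i.2; omega
    simp [hF, hc, hi]
  have hB_summ : Summable (fun i : {i : ℕ // k ≤ i} => sigmaDil M b i.1) := by
    have h1 := ENNReal.summable_toReal hBD
    refine h1.congr fun i => ?_
    have hi : i.1 ≠ 0 := by have := i.2; omega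
    simp only [hFD, if_neg hi, sigmaDil]
    exact ENNReal.toReal_ofReal (hb0 _ (Nat.succ_le_succ (Nat.zero_le _)))
  have hBpos : ∀ i : {i : ℕ // k ≤ i}, 0 ≤ sigmaDil M b i.1 := fun i => hb0 _ (Nat.succ_le_succ (Nat.zero_le _))
  have hB : ENNReal.ofReal (∑' i : {i : ℕ // k ≤ i}, sigmaDil M b i.1)
      = ∑' i : {i : ℕ // k ≤ i}, FD i.1 := by
    rw [ENNReal.ofReal_tsum_of_nonneg hBpos hB_summ]
    refine tsum_congr fun i => ?_
    have hi : i.1 ≠ 0 := by have := i.2; omega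
    simp [hFD, hi, sigmaDil]
  have h0B : 0 ≤ ∑' i : {i : ℕ // k ≤ i}, sigmaDil M b i.1 := tsum_nonneg hBpos
  rw [← ENNReal.ofReal_le_ofReal_iff h0B, ENNReal.ofReal_mul hC0.le, hA, hB]
  exact key
end

section
/- Let 0 < C ≤ 1 and let b = (b_i)_{i≥1} be a nonincreasing summable sequence of nonnegative reals. Set n := ⌊1/C⌋ (so n ≥ 1). Then for every k ≥ 1, C · ∑_{i=⌊k/C⌋}^∞ b_i ≤ ∑_{i=k}^∞ (σ_{1/n} b)_i, where σ_{1/n} b is the sequence of averages of b over consecutive blocks of length n. -/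
open scoped BigOperators ENNReal

/-- for `0 < C ≤ 1`, a nonincreasing nonnegative summable sequence `b`
(indexed from 1) and `n := ⌊1/C⌋ ≥ 1`, one has
`C·∑_{i=⌊k/C⌋}^∞ b i ≤ ∑_{i=k}^∞ (σ_{1/n} b) i` for all `k ≥ 1`. -/
theorem dilation_tail_estimate_of_le_one (C : ℝ) (hC0 : 0 < C) (hC1 : C ≤ 1) (b : ℕ → ℝ)
    (hb0 : ∀ i : ℕ, 1 ≤ i → 0 ≤ b i)
    (hbmono : ∀ i i' : ℕ, 1 ≤ i → i ≤ i' → b i' ≤ b i)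
    (hbsum : Summable fun i : {i : ℕ // 1 ≤ i} => b i.1) :
    ∀ k : ℕ, 1 ≤ k →
      C * ∑' i : {i : ℕ // ⌊(k : ℝ) / C⌋₊ ≤ i}, b i.1 ≤
        ∑' i : {i : ℕ // k ≤ i}, sigmaAvg ⌊1 / C⌋₊ b i.1 := by
  intro k hk
  set n := ⌊1 / C⌋₊ with hndef
  have hn1 : 1 ≤ n := Nat.le_floor (by
    rw [Nat.cast_one, le_div_iff₀ hC0]; linarith)
  have hn0 : 0 < n := hn1
  have hnR : (0:ℝ) < n := by exact_mod_cast hn0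
  have hn_le : (n : ℝ) ≤ 1 / C := Nat.floor_le (by positivity)
  have hCn : C ≤ (n : ℝ)⁻¹ := by
    rw [inv_eq_one_div, le_div_iff₀ hnR]
    calc C * n ≤ C * (1 / C) := by
          exact mul_le_mul_of_nonneg_left hn_le hC0.le
      _ = 1 := by field_simp
  set m := (k - 1) * n + 1 with hmdef
  set K := ⌊(k : ℝ) / C⌋₊ with hKdef
  have hm1 : 1 ≤ m := Nat.le_add_left 1 _
  have hkn : m ≤ k * n := by
    have h1 : k * n = (k - 1) * n + n := by
      cases k with
      | zero => omega
      | succ k' => simp [Nat.succ_mul, Nat.succ_sub_one]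
    omega
  have hmK : m ≤ K := by
    refine le_trans hkn (Nat.le_floor ?_)
    push_cast
    rw [le_div_iff₀ hC0]
    calc (k : ℝ) * n * C ≤ (k : ℝ) * (1/C) * C := by
          have hk0 : (0:ℝ) ≤ k := Nat.cast_nonneg k
          have := mul_le_mul_of_nonneg_left hn_le hk0
          exact mul_le_mul_of_nonneg_right this hC0.le
      _ = k := by field_simp
  -- summability of tails
  have hsum : ∀ m' : ℕ, 1 ≤ m' → Summable fun i : {i : ℕ // m' ≤ i} => b i.1 := by
    intro m' hm'
    have hinj : Function.Injective
        (fun i : {i : ℕ // m' ≤ i} => (⟨i.1, le_trans hm' i.2⟩ : {i : ℕ // 1 ≤ i})) := by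
      intro a b hab
      simpa [Subtype.ext_iff] using hab
    exact hbsum.comp_injective hinj
  have hsum_m : Summable fun i : {i : ℕ // m ≤ i} => b i.1 := hsum m hm1
  have hsum_K : Summable fun i : {i : ℕ // K ≤ i} => b i.1 := hsum K (le_trans hm1 hmK)
  -- the block equivalence
  have hmem : ∀ (p : {j : ℕ // k ≤ j} × Fin n), m ≤ (p.1.1 - 1) * n + 1 + p.2.1 := by
    intro p
    have : (k - 1) * n ≤ (p.1.1 - 1) * n :=
      Nat.mul_le_mul_right n (by have := p.1.2; omega)
    omega
  let e : {j : ℕ // k ≤ j} × Fin n ≃ {i : ℕ // m ≤ i} :=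
  { toFun := fun p => ⟨(p.1.1 - 1) * n + 1 + p.2.1, hmem p⟩
    invFun := fun i =>
      (⟨(i.1 - 1) / n + 1, by
          have hi := i.2
          have h1 : (k - 1) * n ≤ i.1 - 1 := by omega
          have : k - 1 ≤ (i.1 - 1) / n := (Nat.le_div_iff_mul_le hn0).2 h1
          omega⟩,
       ⟨(i.1 - 1) % n, Nat.mod_lt _ hn0⟩)
    left_inv := by
      rintro ⟨⟨j, hj⟩, ⟨r, hr⟩⟩
      have hval : (j - 1) * n + 1 + r - 1 = r + (j - 1) * n := by omega
      have hdiv : (r + (j - 1) * n) / n = j - 1 := by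
        rw [Nat.add_mul_div_right _ _ hn0, Nat.div_eq_of_lt hr, Nat.zero_add]
      have hmod : (r + (j - 1) * n) % n = r := by
        rw [Nat.add_mul_mod_self_right, Nat.mod_eq_of_lt hr]
      have hj1 : 1 ≤ j := le_trans hk hj
      refine Prod.ext (Subtype.ext ?_) (Fin.ext ?_)
      · show ((j - 1) * n + 1 + r - 1) / n + 1 = j
        rw [hval, hdiv]; omega
      · show ((j - 1) * n + 1 + r - 1) % n = r
        rw [hval, hmod]
    right_inv := by
      rintro ⟨i, hi⟩
      have hi1 : 1 ≤ i := le_trans hm1 hi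
      refine Subtype.ext ?_
      show ((i - 1) / n + 1 - 1) * n + 1 + (i - 1) % n = i
      have := Nat.div_add_mod (i - 1) n
      have h2 : ((i - 1) / n + 1 - 1) * n = n * ((i - 1) / n) := by
        rw [Nat.add_sub_cancel, Nat.mul_comm]
      omega }
  have hsum_e : Summable fun p : {j : ℕ // k ≤ j} × Fin n => b (e p).1 :=
    (e.summable_iff (f := fun i : {i : ℕ // m ≤ i} => b i.1)).2 hsum_m
  have key : (∑' i : {i : ℕ // m ≤ i}, b i.1) =
      ∑' j : {j : ℕ // k ≤ j}, ∑ r : Fin n, b ((j.1 - 1) * n + 1 + r.1) := by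
    rw [← e.tsum_eq (fun i : {i : ℕ // m ≤ i} => b i.1)]
    rw [Summable.tsum_prod' hsum_e (fun j => Summable.of_finite)]
    congr 1
    funext j
    rw [tsum_fintype]
    rfl
  have hblock : ∀ j : {j : ℕ // k ≤ j},
      sigmaAvg n b j.1 = (n : ℝ)⁻¹ * ∑ r : Fin n, b ((j.1 - 1) * n + 1 + r.1) := by
    intro j
    have hj1 : 1 ≤ j.1 := le_trans hk j.2
    unfold sigmaAvg
    congr 1
    have hjj : j.1 * n = (j.1 - 1) * n + n := by
      cases hj : j.1 with
      | zero => omega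
      | succ j' => simp [Nat.succ_mul, Nat.succ_sub_one]
    rw [← Finset.Ico_add_one_right_eq_Icc, Finset.sum_Ico_eq_sum_range]
    have hlen : j.1 * n + 1 - ((j.1 - 1) * n + 1) = n := by omega
    rw [hlen, Fin.sum_univ_eq_sum_range (fun r => b ((j.1 - 1) * n + 1 + r)) n]
  have hRHS : (∑' i : {i : ℕ // k ≤ i}, sigmaAvg n b i.1) =
      (n : ℝ)⁻¹ * ∑' i : {i : ℕ // m ≤ i}, b i.1 := by
    rw [key, ← tsum_mul_left]
    exact tsum_congr hblock
  have htail : (∑' i : {i : ℕ // K ≤ i}, b i.1) ≤ ∑' i : {i : ℕ // m ≤ i}, b i.1 := by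
    refine Summable.tsum_le_tsum_of_inj
      (fun i : {i : ℕ // K ≤ i} => (⟨i.1, le_trans hmK i.2⟩ : {i : ℕ // m ≤ i}))
      (fun a b hab => by simpa [Subtype.ext_iff] using hab)
      (fun c _ => hb0 c.1 (le_trans hm1 c.2)) (fun _ => le_rfl) hsum_K hsum_m
  have hKnn : (0:ℝ) ≤ ∑' i : {i : ℕ // K ≤ i}, b i.1 :=
    tsum_nonneg fun i => hb0 i.1 (le_trans (le_trans hm1 hmK) i.2)
  calc C * ∑' i : {i : ℕ // K ≤ i}, b i.1
      ≤ (n : ℝ)⁻¹ * ∑' i : {i : ℕ // K ≤ i}, b i.1 :=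
        mul_le_mul_of_nonneg_right hCn hKnn
    _ ≤ (n : ℝ)⁻¹ * ∑' i : {i : ℕ // m ≤ i}, b i.1 :=
        mul_le_mul_of_nonneg_left htail (by positivity)
    _ = ∑' i : {i : ℕ // k ≤ i}, sigmaAvg n b i.1 := hRHS.symm
end

section
/- Let x, b ∈ l_1 and C > 0 satisfy K(s, x; l_0, l_1) ≤ C · K(s, b; l_0, l_1) for all s > 0. Then E(2t, x; l_0, l_1) ≤ 2C · E(t/C, b; l_0, l_1) for all t > 0; equivalently, ∑_{i=k}^∞ x_i^* ≤ 2C · ∑_{i=max(⌊k/(2C)⌋,1)}^∞ b_i^* for all k ≥ 1. -/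
open scoped BigOperators ENNReal

/-! ### Auxiliary development: greedy rearrangement theory -/

section Aux

open Filter

private lemma l1Norm_nonneg (y : ℕ → ℝ) : 0 ≤ l1Norm y :=
  tsum_nonneg fun _ => abs_nonneg _

private lemma finSupp_zero : FinSupp (0 : ℕ → ℝ) := by
  simp [FinSupp]

private lemma suppCard_zero : suppCard (0 : ℕ → ℝ) = 0 := by
  simp [suppCard]

private lemma memL1_sub {y x₀ : ℕ → ℝ} (hy : MemL1 y) (hfs : FinSupp x₀) :
    MemL1 (y - x₀) := by
  have h0 : Summable fun i => |x₀ i| := by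
    apply summable_of_ne_finset_zero (s := hfs.toFinset)
    intro i hi
    have hi' : x₀ i = 0 := by
      by_contra hne
      exact hi (hfs.mem_toFinset.mpr hne)
    simp [hi']
  refine Summable.of_nonneg_of_le (fun i => abs_nonneg _) (fun i => ?_) (hy.add h0)
  simpa [Pi.sub_apply, sub_eq_add_neg] using (abs_add_le (y i) (-(x₀ i))).trans_eq (by rw [abs_neg])

variable {u : ℕ → ℝ}

private lemma finite_ge (hu : Summable fun i => |u i|) {c : ℝ} (hc : 0 < c) :
    {j : ℕ | c ≤ |u j|}.Finite := by
  have h := hu.tendsto_cofinite_zero (Iio_mem_nhds hc)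
  rw [Filter.mem_map, Filter.mem_cofinite] at h
  convert h using 1
  ext j
  simp [Set.mem_setOf_eq, not_lt]

private lemma exists_max (hu : Summable fun i => |u i|) (F : Finset ℕ) :
    ∃ i, i ∉ F ∧ ∀ j ∉ F, |u j| ≤ |u i| := by
  by_cases hz : ∀ j ∉ F, u j = 0
  · obtain ⟨i, hi⟩ := Infinite.exists_notMem_finset F
    exact ⟨i, hi, fun j hj => by rw [hz j hj]; simp⟩
  · push_neg at hz
    obtain ⟨j₀, hj₀F, hj₀⟩ := hz
    have hc : 0 < |u j₀| := abs_pos.mpr hj₀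
    have hfin : {j : ℕ | |u j₀| ≤ |u j|}.Finite := finite_ge hu hc
    have hj₀T : j₀ ∈ hfin.toFinset \ F := by
      simp [Set.Finite.mem_toFinset, hj₀F]
    obtain ⟨i, hiT, hmax⟩ :=
      Finset.exists_max_image (hfin.toFinset \ F) (fun j => |u j|) ⟨j₀, hj₀T⟩
    have hic : |u j₀| ≤ |u i| := hmax j₀ hj₀T
    refine ⟨i, (Finset.mem_sdiff.mp hiT).2, fun j hjF => ?_⟩
    by_cases hj : |u j₀| ≤ |u j|
    · exact hmax j (Finset.mem_sdiff.mpr ⟨hfin.mem_toFinset.mpr hj, hjF⟩)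
    · exact (le_of_not_ge hj).trans hic

private noncomputable def gF (u : ℕ → ℝ) (hu : Summable fun i => |u i|) : ℕ → Finset ℕ
  | 0 => ∅
  | n + 1 => insert (Classical.choose (exists_max hu (gF u hu n))) (gF u hu n)

private noncomputable def gA (u : ℕ → ℝ) (hu : Summable fun i => |u i|) (n : ℕ) : ℕ :=
  Classical.choose (exists_max hu (gF u hu n))

variable (hu : Summable fun i => |u i|)

private lemma gA_not_mem (n : ℕ) : gA u hu n ∉ gF u hu n :=
  (Classical.choose_spec (exists_max hu (gF u hu n))).1

private lemma gA_max (n : ℕ) : ∀ j ∉ gF u hu n, |u j| ≤ |u (gA u hu n)| :=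
  (Classical.choose_spec (exists_max hu (gF u hu n))).2

private lemma gF_succ (n : ℕ) : gF u hu (n + 1) = insert (gA u hu n) (gF u hu n) := rfl

private lemma gF_card (n : ℕ) : (gF u hu n).card = n := by
  induction n with
  | zero => rfl
  | succ n ih => rw [gF_succ, Finset.card_insert_of_notMem (gA_not_mem hu n), ih]

private lemma gF_mono : Monotone (gF u hu) := by
  apply monotone_nat_of_le_succ
  intro n
  rw [gF_succ]
  exact Finset.subset_insert _ _

private lemma mem_gF {i n : ℕ} : i ∈ gF u hu n ↔ ∃ j < n, gA u hu j = i := by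
  induction n with
  | zero => simp [gF]
  | succ n ih =>
    rw [gF_succ, Finset.mem_insert, ih]
    constructor
    · rintro (rfl | ⟨j, hj, rfl⟩)
      · exact ⟨n, Nat.lt_succ_self n, rfl⟩
      · exact ⟨j, hj.trans (Nat.lt_succ_self n), rfl⟩
    · rintro ⟨j, hj, rfl⟩
      rcases Nat.lt_succ_iff_lt_or_eq.mp hj with hj | rfl
      · exact Or.inr ⟨j, hj, rfl⟩
      · exact Or.inl rfl

private lemma gA_mem_gF {j n : ℕ} (hj : j < n) : gA u hu j ∈ gF u hu n :=
  (mem_gF hu).mpr ⟨j, hj, rfl⟩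

private lemma gA_ne {m n : ℕ} (h : m < n) : gA u hu m ≠ gA u hu n := fun he =>
  gA_not_mem hu n (he ▸ gA_mem_gF hu h)

private lemma gA_injective : Function.Injective (gA u hu) := by
  intro m n hmn
  rcases lt_trichotomy m n with h | h | h
  · exact absurd hmn (gA_ne hu h)
  · exact h
  · exact absurd hmn.symm (gA_ne hu h)

private lemma gA_antitone {m n : ℕ} (h : m ≤ n) : |u (gA u hu n)| ≤ |u (gA u hu m)| := by
  have step : ∀ p, |u (gA u hu (p + 1))| ≤ |u (gA u hu p)| := by
    intro p
    apply gA_max hu p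
    intro hmem
    exact gA_not_mem hu (p + 1) (gF_mono hu (Nat.le_succ p) hmem)
  have hanti : Antitone (fun n => |u (gA u hu n)|) := antitone_nat_of_succ_le step
  exact hanti h

private lemma supp_subset_range {i : ℕ} (hi : u i ≠ 0) : ∃ n, gA u hu n = i := by
  by_contra hn
  push_neg at hn
  have hmem : ∀ n, i ∉ gF u hu n := by
    intro n hmem
    obtain ⟨j, _, hj⟩ := (mem_gF hu).mp hmem
    exact hn j hj
  have hle : ∀ n, |u i| ≤ |u (gA u hu n)| := fun n => gA_max hu n i (hmem n)
  have hfin : {j : ℕ | |u i| ≤ |u j|}.Finite := finite_ge hu (abs_pos.mpr hi)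
  have hsub : Set.range (fun n => gA u hu n) ⊆ {j : ℕ | |u i| ≤ |u j|} := by
    rintro _ ⟨n, rfl⟩
    exact hle n
  exact (Set.infinite_range_of_injective (gA_injective hu)) (hfin.subset hsub)

private lemma rearr_eq (m : ℕ) : rearr u (m + 1) = |u (gA u hu m)| := by
  set v := |u (gA u hu m)| with hv
  have hsub : {i : ℕ | v < |u i|} ⊆ ↑(gF u hu m) := by
    intro i hi
    by_contra hmem
    exact absurd (gA_max hu m i hmem) (not_le.mpr hi)
  have hfin : {i : ℕ | v < |u i|}.Finite := (gF u hu m).finite_toSet.subset hsub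
  have hncard : {i : ℕ | v < |u i|}.ncard < m + 1 := by
    have := Set.ncard_le_ncard hsub (gF u hu m).finite_toSet
    rw [Set.ncard_coe_finset, gF_card hu] at this
    omega
  have hv_mem : v ∈ {t : ℝ | 0 ≤ t ∧ {i : ℕ | t < |u i|}.Finite ∧
      {i : ℕ | t < |u i|}.ncard < m + 1} := ⟨abs_nonneg _, hfin, hncard⟩
  have hlb : ∀ t ∈ {t : ℝ | 0 ≤ t ∧ {i : ℕ | t < |u i|}.Finite ∧
      {i : ℕ | t < |u i|}.ncard < m + 1}, v ≤ t := by
    rintro t ⟨ht0, htfin, htcard⟩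
    by_contra hlt
    push_neg at hlt
    have hsub2 : ↑(gF u hu (m + 1)) ⊆ {i : ℕ | t < |u i|} := by
      intro i hi
      obtain ⟨j, hj, rfl⟩ := (mem_gF hu).mp hi
      have : v ≤ |u (gA u hu j)| := gA_antitone hu (Nat.lt_succ_iff.mp hj)
      exact lt_of_lt_of_le hlt this
    have := Set.ncard_le_ncard hsub2 htfin
    rw [Set.ncard_coe_finset, gF_card hu] at this
    omega
  exact le_antisymm (csInf_le ⟨v, hlb⟩ hv_mem) (le_csInf ⟨v, hv_mem⟩ hlb)

private lemma tailSum_eq (m : ℕ) :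
    tailSum u (m + 1) = ∑' i : ℕ, (if i ∈ gF u hu m then 0 else |u i|) := by
  have h1 : tailSum u (m + 1) = ∑' n : ℕ, |u (gA u hu (m + n))| := by
    unfold tailSum
    apply tsum_congr
    intro n
    rw [show m + 1 + n = (m + n) + 1 by omega, rearr_eq hu]
  rw [h1]
  set g : ℕ → ℝ := fun i => if i ∈ gF u hu m then 0 else |u i| with hg
  have he_inj : Function.Injective (fun n => gA u hu (m + n)) := by
    intro a b hab
    have := gA_injective hu hab
    omega
  have hsupp : Function.support g ⊆ Set.range (fun n => gA u hu (m + n)) := by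
    intro i hi
    simp only [Function.mem_support, hg] at hi
    by_cases hmem : i ∈ gF u hu m
    · simp [hmem] at hi
    · have hui : u i ≠ 0 := by
        intro h0
        simp [hmem, h0] at hi
      obtain ⟨n, rfl⟩ := supp_subset_range hu hui
      have hn : m ≤ n := by
        by_contra hlt
        exact hmem (gA_mem_gF hu (not_le.mp hlt))
      exact ⟨n - m, by simp [Nat.add_sub_cancel' hn]⟩
  have he : ∀ n, g (gA u hu (m + n)) = |u (gA u hu (m + n))| := by
    intro n
    have : gA u hu (m + n) ∉ gF u hu m := fun hmem =>
      gA_not_mem hu (m + n) (gF_mono hu (Nat.le_add_right m n) hmem)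
    simp [hg, this]
  calc ∑' n : ℕ, |u (gA u hu (m + n))| = ∑' n : ℕ, g (gA u hu (m + n)) :=
        (tsum_congr he).symm
    _ = ∑' i : ℕ, g i := he_inj.tsum_eq hsupp

private lemma summable_out (hu : Summable fun i => |u i|) (G : Finset ℕ) :
    Summable fun i => if i ∈ G then 0 else |u i| := by
  refine Summable.of_nonneg_of_le (fun i => ?_) (fun i => ?_) hu
  · split <;> simp [abs_nonneg]
  · split <;> simp [abs_nonneg]

private lemma split_sum (hu : Summable fun i => |u i|) (G : Finset ℕ) :
    ∑' i : ℕ, |u i| = (∑ i ∈ G, |u i|) + ∑' i : ℕ, (if i ∈ G then 0 else |u i|) := by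
  have s1 : Summable fun i => if i ∈ G then |u i| else 0 := by
    apply summable_of_ne_finset_zero (s := G)
    intro i hi
    simp [hi]
  have s2 : Summable fun i => if i ∈ G then 0 else |u i| := summable_out hu G
  have h1 : ∀ i, |u i| = (if i ∈ G then |u i| else 0) + (if i ∈ G then 0 else |u i|) := by
    intro i; split <;> simp
  rw [tsum_congr h1, Summable.tsum_add s1 s2, tsum_eq_sum (s := G) (f := fun i => if i ∈ G then |u i| else 0)
    (fun i hi => by simp [hi])]
  congr 1
  exact Finset.sum_congr rfl fun i hi => by simp [hi]

private lemma sum_le_sum_top {m : ℕ} (G : Finset ℕ) (hG : G.card ≤ m) :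
    ∑ i ∈ G, |u i| ≤ ∑ i ∈ gF u hu m, |u i| := by
  set F := gF u hu m with hF
  set v := |u (gA u hu m)| with hv
  have h1 : ∀ i ∈ F, v ≤ |u i| := by
    intro i hi
    obtain ⟨j, hj, rfl⟩ := (mem_gF hu).mp hi
    exact gA_antitone hu hj.le
  have h2 : ∀ i ∉ F, |u i| ≤ v := gA_max hu m
  have hcards : (G \ F).card ≤ (F \ G).card := by
    have e1 := Finset.card_inter_add_card_sdiff G F
    have e2 := Finset.card_inter_add_card_sdiff F G
    rw [Finset.inter_comm] at e1
    have hFc : F.card = m := gF_card hu m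
    omega
  have c1 : ∑ i ∈ G \ F, |u i| ≤ (G \ F).card • v :=
    Finset.sum_le_card_nsmul _ _ _ fun i hi => h2 i (Finset.mem_sdiff.mp hi).2
  have c2 : (F \ G).card • v ≤ ∑ i ∈ F \ G, |u i| :=
    Finset.card_nsmul_le_sum _ _ _ fun i hi => h1 i (Finset.mem_sdiff.mp hi).1
  have c3 : ((G \ F).card : ℝ) • v ≤ ((F \ G).card : ℝ) • v := by
    rw [smul_eq_mul, smul_eq_mul]
    exact mul_le_mul_of_nonneg_right (Nat.cast_le.mpr hcards) (abs_nonneg _)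
  simp only [nsmul_eq_mul] at c1 c2
  rw [smul_eq_mul, smul_eq_mul] at c3
  have key : ∑ i ∈ G \ F, |u i| ≤ ∑ i ∈ F \ G, |u i| := le_trans c1 (le_trans c3 c2)
  have e3 : ∑ i ∈ G ∩ F, |u i| + ∑ i ∈ G \ F, |u i| = ∑ i ∈ G, |u i| :=
    Finset.sum_inter_add_sum_sdiff G F _
  have e4 : ∑ i ∈ F ∩ G, |u i| + ∑ i ∈ F \ G, |u i| = ∑ i ∈ F, |u i| :=
    Finset.sum_inter_add_sum_sdiff F G _
  rw [Finset.inter_comm] at e4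
  linarith

private lemma Efun_nonneg (s : ℝ) (y : ℕ → ℝ) : 0 ≤ Efun s y := by
  apply Real.sInf_nonneg
  rintro r ⟨x₀, _, _, rfl⟩
  exact l1Norm_nonneg _

private lemma Efun_bddBelow (s : ℝ) (y : ℕ → ℝ) :
    BddBelow {r : ℝ | ∃ x₀, FinSupp x₀ ∧ (suppCard x₀ : ℝ) ≤ s ∧ r = l1Norm (y - x₀)} :=
  ⟨0, by rintro r ⟨x₀, _, _, rfl⟩; exact l1Norm_nonneg _⟩

private lemma Efun_set_nonempty {s : ℝ} (hs : 0 ≤ s) (y : ℕ → ℝ) :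
    {r : ℝ | ∃ x₀, FinSupp x₀ ∧ (suppCard x₀ : ℝ) ≤ s ∧ r = l1Norm (y - x₀)}.Nonempty :=
  ⟨l1Norm (y - 0), 0, finSupp_zero, by rw [suppCard_zero]; exact_mod_cast hs, rfl⟩

/-- Lemma B: `E(s, u) ≤ ∑_{i=m+1}^∞ u_i^*` whenever `m ≤ s`. -/
private lemma Efun_le_tailSum (hu : Summable fun i => |u i|) {m : ℕ} {s : ℝ}
    (hms : (m : ℝ) ≤ s) :
    Efun s u ≤ tailSum u (m + 1) := by
  set x₀ : ℕ → ℝ := fun i => if i ∈ gF u hu m then u i else 0 with hx₀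
  have hsub : {i : ℕ | x₀ i ≠ 0} ⊆ ↑(gF u hu m) := by
    intro i hi
    simp only [Set.mem_setOf_eq, hx₀] at hi
    by_contra hmem
    rw [Finset.mem_coe] at hmem
    simp [hmem] at hi
  have hfs : FinSupp x₀ := (gF u hu m).finite_toSet.subset hsub
  have hcard : (suppCard x₀ : ℝ) ≤ s := by
    refine le_trans ?_ hms
    have : suppCard x₀ ≤ m := by
      have := Set.ncard_le_ncard hsub (gF u hu m).finite_toSet
      rwa [Set.ncard_coe_finset, gF_card hu] at this
    exact_mod_cast this
  have hval : l1Norm (u - x₀) = tailSum u (m + 1) := by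
    rw [tailSum_eq hu]
    unfold l1Norm
    apply tsum_congr
    intro i
    by_cases hmem : i ∈ gF u hu m <;> simp [hx₀, hmem, Pi.sub_apply]
  have hmem : tailSum u (m + 1) ∈
      {r : ℝ | ∃ x₀, FinSupp x₀ ∧ (suppCard x₀ : ℝ) ≤ s ∧ r = l1Norm (u - x₀)} :=
    ⟨x₀, hfs, hcard, hval.symm⟩
  exact csInf_le (Efun_bddBelow s u) hmem

/-- Lemma A: `∑_{i=m+1}^∞ u_i^* ≤ E(s, u)` whenever `s < m + 1` (and `0 < s`). -/
private lemma tailSum_le_Efun (hu : Summable fun i => |u i|) {m : ℕ} {s : ℝ}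
    (hs0 : 0 ≤ s) (hsm : s < (m : ℝ) + 1) :
    tailSum u (m + 1) ≤ Efun s u := by
  apply le_csInf (Efun_set_nonempty hs0 u)
  rintro r ⟨x₀, hfs, hcard, rfl⟩
  set G : Finset ℕ := hfs.toFinset with hG
  have hGcard : G.card ≤ m := by
    have h1 : suppCard x₀ = G.card := Set.ncard_eq_toFinset_card _ hfs
    have h2 : (G.card : ℝ) < (m : ℝ) + 1 := by rw [← h1]; exact lt_of_le_of_lt hcard hsm
    have : G.card < m + 1 := by exact_mod_cast h2
    omega
  have step1 : tailSum u (m + 1) ≤ ∑' i : ℕ, (if i ∈ G then 0 else |u i|) := by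
    rw [tailSum_eq hu]
    have hsplitF := split_sum hu (gF u hu m)
    have hsplitG := split_sum hu G
    have hle := sum_le_sum_top hu G hGcard
    linarith
  refine le_trans step1 ?_
  unfold l1Norm
  apply Summable.tsum_le_tsum (fun i => ?_) (summable_out hu G) (memL1_sub hu hfs)
  by_cases hmem : i ∈ G
  · simp [hmem, abs_nonneg]
  · have : x₀ i = 0 := by
      by_contra hne
      exact hmem (hfs.mem_toFinset.mpr hne)
    simp [hmem, this]

end Aux

/-- if `x, b ∈ ℓ¹`, `C > 0` and `K(s,x) ≤ C·K(s,b)` for all `s > 0`, then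
`E(2t, x) ≤ 2C·E(t/C, b)` for all `t > 0`; equivalently,
`∑_{i=k}^∞ x_i^* ≤ 2C·∑_{i=max(⌊k/(2C)⌋,1)}^∞ b_i^*` for all `k ≥ 1`. -/
theorem Efun_estimate_of_K_estimate (x b : ℕ → ℝ) (hx : MemL1 x) (hb : MemL1 b)
    (C : ℝ) (hC : 0 < C) (h : ∀ s > (0 : ℝ), Kfun s x ≤ C * Kfun s b) :
    (∀ t > (0 : ℝ), Efun (2 * t) x ≤ 2 * C * Efun (t / C) b) ∧
      ∀ k : ℕ, 1 ≤ k →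
        tailSum x k ≤ 2 * C * tailSum b (max ⌊(k : ℝ) / (2 * C)⌋₊ 1) := by
  -- main estimate (part 1)
  have main : ∀ t > (0 : ℝ), Efun (2 * t) x ≤ 2 * C * Efun (t / C) b := by
    intro t ht
    have hEb0 : 0 ≤ Efun (t / C) b := Efun_nonneg _ _
    rcases le_or_gt (Efun (2 * t) x) 0 with hE2 | hE2
    · exact hE2.trans (by positivity)
    set E₂ := Efun (2 * t) x with hE₂def
    set Eb := Efun (t / C) b with hEbdef
    set s : ℝ := 2 * t / E₂ with hsdef
    have hs : 0 < s := by positivity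
    have hsE : s * E₂ = 2 * t := by
      rw [hsdef]; field_simp
    -- lower bound for K(s, x)
    have hKx : 2 * t ≤ Kfun s x := by
      apply le_csInf
      · exact ⟨(suppCard (0 : ℕ → ℝ) : ℝ) + s * l1Norm x, 0, x, (zero_add x).symm,
          finSupp_zero, hx, rfl⟩
      rintro r ⟨x₀, x₁, hsum, hfs, _, rfl⟩
      have hx₁ : x₁ = x - x₀ := by
        funext i
        have := congrFun hsum i
        simp only [Pi.add_apply, Pi.sub_apply] at this ⊢
        linarith
      by_cases hcs : (suppCard x₀ : ℝ) ≤ 2 * t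
      · have hmem : l1Norm x₁ ∈ {r : ℝ | ∃ y₀, FinSupp y₀ ∧ (suppCard y₀ : ℝ) ≤ 2 * t ∧
            r = l1Norm (x - y₀)} := ⟨x₀, hfs, hcs, by rw [hx₁]⟩
        have hE : E₂ ≤ l1Norm x₁ := csInf_le (Efun_bddBelow _ _) hmem
        have h1 : s * E₂ ≤ s * l1Norm x₁ := mul_le_mul_of_nonneg_left hE hs.le
        have h2 : (0 : ℝ) ≤ (suppCard x₀ : ℝ) := Nat.cast_nonneg _
        linarith
      · push_neg at hcs
        have h2 : (0 : ℝ) ≤ s * l1Norm x₁ := mul_nonneg hs.le (l1Norm_nonneg _)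
        linarith
    -- upper bound for K(s, b)
    have hKb : ∀ ε > (0 : ℝ), Kfun s b ≤ t / C + s * (Eb + ε) := by
      intro ε hε
      have hne := Efun_set_nonempty (s := t / C) (by positivity) b
      have hlt : Efun (t / C) b < Eb + ε := by rw [← hEbdef]; linarith
      obtain ⟨r, ⟨x₀, hfs, hcard, rfl⟩, hrlt⟩ := exists_lt_of_csInf_lt hne hlt
      have hmem : (suppCard x₀ : ℝ) + s * l1Norm (b - x₀) ∈
          {r : ℝ | ∃ y₀ y₁, b = y₀ + y₁ ∧ FinSupp y₀ ∧ MemL1 y₁ ∧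
            r = (suppCard y₀ : ℝ) + s * l1Norm y₁} :=
        ⟨x₀, b - x₀, by funext i; simp, hfs, memL1_sub hb hfs, rfl⟩
      have hKle : Kfun s b ≤ (suppCard x₀ : ℝ) + s * l1Norm (b - x₀) := by
        apply csInf_le
        · refine ⟨0, ?_⟩
          rintro r ⟨y₀, y₁, _, _, _, rfl⟩
          exact add_nonneg (Nat.cast_nonneg _) (mul_nonneg hs.le (l1Norm_nonneg _))
        · exact hmem
      have h1 : s * l1Norm (b - x₀) ≤ s * (Eb + ε) :=
        mul_le_mul_of_nonneg_left hrlt.le hs.le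
      linarith
    -- combine
    have hkey : t ≤ C * s * Eb := by
      apply le_of_forall_pos_le_add
      intro ε' hε'
      have hε : (0 : ℝ) < ε' / (C * s) := by positivity
      have h1 := hKb (ε' / (C * s)) hε
      have h3 : Kfun s x ≤ C * Kfun s b := h s hs
      have h4 : C * Kfun s b ≤ C * (t / C + s * (Eb + ε' / (C * s))) :=
        mul_le_mul_of_nonneg_left h1 hC.le
      have h5 : C * (t / C + s * (Eb + ε' / (C * s))) = t + C * s * Eb + ε' := by
        field_simp
        ring
      linarith
    nlinarith [hkey, hsE, hs, hE2, mul_pos hs hE2]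
  refine ⟨main, ?_⟩
  intro k hk
  set m : ℕ := max ⌊(k : ℝ) / (2 * C)⌋₊ 1 with hmdef
  have hm1 : 1 ≤ m := le_max_right _ _
  have hk0 : (0 : ℝ) < (k : ℝ) := by exact_mod_cast hk
  have hu0 : (0 : ℝ) < (k : ℝ) / (2 * C) := by positivity
  have hmu : (m : ℝ) - 1 < (k : ℝ) / (2 * C) := by
    rcases le_or_gt ⌊(k : ℝ) / (2 * C)⌋₊ 1 with hf | hf
    · have : m = 1 := by omega
      rw [this]; push_cast; linarith
    · have hmf : m = ⌊(k : ℝ) / (2 * C)⌋₊ := by omega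
      have hle : (⌊(k : ℝ) / (2 * C)⌋₊ : ℝ) ≤ (k : ℝ) / (2 * C) := Nat.floor_le hu0.le
      rw [hmf]; linarith
  have hCm : (0 : ℝ) ≤ C * ((m : ℝ) - 1) := by
    have : (1 : ℝ) ≤ (m : ℝ) := by exact_mod_cast hm1
    nlinarith
  have hCmk : C * ((m : ℝ) - 1) < (k : ℝ) / 2 := by
    have h1 : C * ((m : ℝ) - 1) < C * ((k : ℝ) / (2 * C)) :=
      mul_lt_mul_of_pos_left hmu hC
    have h2 : C * ((k : ℝ) / (2 * C)) = (k : ℝ) / 2 := by field_simp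
    linarith
  set t : ℝ := (C * ((m : ℝ) - 1) + (k : ℝ) / 2) / 2 with htdef
  have ht : 0 < t := by rw [htdef]; positivity
  have h2t : 2 * t < (k : ℝ) := by rw [htdef]; linarith
  have htC : (m : ℝ) - 1 ≤ t / C := by
    rw [le_div_iff₀ hC]
    rw [htdef]; nlinarith [hCmk, hCm]
  obtain ⟨k', rfl⟩ : ∃ k', k = k' + 1 := ⟨k - 1, by omega⟩
  have step1 : tailSum x (k' + 1) ≤ Efun (2 * t) x := by
    apply tailSum_le_Efun hx (le_of_lt (by linarith))
    push_cast at h2t ⊢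
    linarith
  have step2 : Efun (2 * t) x ≤ 2 * C * Efun (t / C) b := main t ht
  have step3 : Efun (t / C) b ≤ tailSum b ((m - 1) + 1) := by
    apply Efun_le_tailSum hb
    have hcast : ((m - 1 : ℕ) : ℝ) = (m : ℝ) - 1 := by
      rw [Nat.cast_sub hm1]; norm_num
    rw [hcast]; exact htC
  have hmm : (m - 1) + 1 = m := by omega
  rw [hmm] at step3
  calc tailSum x (k' + 1) ≤ 2 * C * Efun (t / C) b := le_trans step1 step2
    _ ≤ 2 * C * tailSum b m := by
        apply mul_le_mul_of_nonneg_left step3 (by positivity)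
end
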